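/- arXiv:2501.11157 — 6 statements merged into one kernel-verified Lean document; each statement's English description precedes it below -/
import Mathlib

section
/- Let T be a tree. If there exists a path P in T such that every connected component of T \ N[P] has thinness at most k, then thin(T) ≤ k + 1. -/
/-! The closed neighbourhood `N[P]` of the path induces a caterpillar, which is `1`-thin: list the
spine in path order with the leaves of each spine vertex just before it. In a tree every component
of `T \ N[P]` is joined to the connected set `N[P]` by exactly one edge, so inserting each
component, laid out with its own `k` classes, right after its attachment vertex in `N[P]` and
giving `N[P]` one new class yields a consistent layout with `k + 1` classes. -/

open SimpleGraph

variable {V : Type*}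

def Consistent (G : SimpleGraph V) (r : V → V → Prop) {k : ℕ} (C : V → Fin k) : Prop :=
  ∀ u v w, r u v → r v w → C u = C v → G.Adj u w → G.Adj v w

def IsKThin (G : SimpleGraph V) (k : ℕ) : Prop :=
  ∃ r : V → V → Prop, IsStrictTotalOrder V r ∧ ∃ C : V → Fin k, Consistent G r C

noncomputable def Thinness (G : SimpleGraph V) : ℕ := sInf {k | IsKThin G k}

noncomputable def DanglingThin (G : SimpleGraph V) (v u : V) : ℕ :=
  Thinness (G.induce ((G.deleteEdges {s(v,u)}).connectedComponentMk u).supp)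

def KNeighbor (G : SimpleGraph V) (k : ℕ) (x v : V) : Prop :=
  G.Adj x v ∧ ∃ u, G.Adj v u ∧ u ≠ x ∧ k ≤ DanglingThin G v u

def IsChild (G : SimpleGraph V) (rt x v : V) : Prop :=
  G.Adj x v ∧ G.dist rt x + 1 = G.dist rt v

def IsAncestor (G : SimpleGraph V) (rt v x : V) : Prop :=
  v ≠ x ∧ G.dist rt v + G.dist v x = G.dist rt x

def Subtree (G : SimpleGraph V) (rt v : V) : Set V :=
  {w | G.dist rt v + G.dist v w = G.dist rt w}

def ChildKNeighbor (G : SimpleGraph V) (rt : V) (k : ℕ) (x v : V) : Prop :=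
  IsChild G rt x v ∧ KNeighbor G k x v

noncomputable def Critical (G : SimpleGraph V) (rt x : V) : Prop :=
  {v | ChildKNeighbor G rt (Thinness G) x v}.ncard = 2

namespace IsKThin

variable {G : SimpleGraph V} {k : ℕ}

lemma of_injective {α : Type*} [LinearOrder α] {f : V → α} (hf : f.Injective) {C : V → Fin k}
    (hC : Consistent G (fun u v => f u < f v) C) : IsKThin G k :=
  ⟨_, hf.isStrictTotalOrder_onFun (r := (· < ·)), C, hC⟩

lemma exists_injective_nat [Finite V] (h : IsKThin G k) :
    ∃ f : V → ℕ, f.Injective ∧ ∃ C : V → Fin k, Consistent G (fun u v => f u < f v) C := by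
  classical
  obtain ⟨r, hr, C, hC⟩ := h
  let _ := linearOrderOfSTO r
  let _ := Fintype.ofFinite V
  let e := (Fintype.orderIsoFinOfCardEq V rfl).symm
  exact ⟨fun v => e v, fun u v huv => e.injective (Fin.ext huv), C,
    fun u v w huv hvw => hC u v w (e.lt_iff_lt.mp huv) (e.lt_iff_lt.mp hvw)⟩

lemma mono (h : IsKThin G k) {n : ℕ} (hkn : k ≤ n) : IsKThin G n := by
  obtain ⟨r, hr, C, hC⟩ := h
  exact ⟨r, hr, Fin.castLE hkn ∘ C,
    fun u v w huv hvw hc => hC u v w huv hvw (Fin.castLE_injective hkn hc)⟩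

lemma card [Finite V] (G : SimpleGraph V) : IsKThin G (Nat.card V) := by
  let e := Finite.equivFin V
  refine of_injective e.injective (C := e) fun u v w huv _ hc _ => ?_
  rw [e.injective hc] at huv
  exact absurd huv (lt_irrefl _)

lemma of_thinness_le [Finite V] (h : Thinness G ≤ k) : IsKThin G k :=
  mono (Nat.sInf_mem (s := {m | IsKThin G m}) ⟨_, card G⟩) h

end IsKThin

lemma isKThin_of_forall_connectedComponent [Finite V] {G : SimpleGraph V} {k : ℕ}
    (h : ∀ c : G.ConnectedComponent, IsKThin (G.induce c.supp) k) : IsKThin G k := by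
  choose f hf C hC using fun c => (h c).exists_injective_nat
  obtain ⟨idx, hidx⟩ := Countable.exists_injective_nat G.ConnectedComponent
  let key : V → ℕ ×ₗ ℕ := fun v => toLex (idx (G.connectedComponentMk v), f _ ⟨v, rfl⟩)
  have key_eq : ∀ c v (hv : v ∈ c.supp), key v = toLex (idx c, f c ⟨v, hv⟩) := by
    rintro _ v rfl; rfl
  let col : V → Fin k := fun v => C _ ⟨v, rfl⟩
  have col_eq : ∀ c v (hv : v ∈ c.supp), col v = C c ⟨v, hv⟩ := by
    rintro _ v rfl; rfl
  have fst_le : ∀ {u v}, key u ≤ key v →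
      idx (G.connectedComponentMk u) ≤ idx (G.connectedComponentMk v) :=
    fun h => Prod.Lex.monotone_fst _ _ h
  refine IsKThin.of_injective (f := key) (C := col) (fun u v huv => ?_) ?_
  · have hv : v ∈ (G.connectedComponentMk u).supp :=
      hidx (le_antisymm (fst_le huv.ge) (fst_le huv.le))
    rw [key_eq _ v hv, toLex_inj, Prod.ext_iff] at huv
    exact congrArg Subtype.val (hf _ huv.2)
  · intro u v w huv hvw hc hadj
    set c := G.connectedComponentMk u
    have hw : w ∈ c.supp := (ConnectedComponent.connectedComponentMk_eq_of_adj hadj).symm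
    have hv : v ∈ c.supp :=
      hidx (le_antisymm ((fst_le hvw.le).trans_eq (congrArg idx hw)) (fst_le huv.le))
    rw [key_eq c u rfl, key_eq c v hv] at huv
    rw [key_eq c v hv, key_eq c w hw] at hvw
    simp only [Prod.Lex.toLex_lt_toLex, lt_irrefl, true_and, false_or] at huv hvw
    rw [col_eq c u rfl, col_eq c v hv] at hc
    exact hC c ⟨u, rfl⟩ ⟨v, hv⟩ ⟨w, hw⟩ huv hvw hc hadj

lemma isKThin_one_of_caterpillar [Finite V] {G : SimpleGraph V} {S : Set V} {z : V → V}
    {pos : V → ℕ}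
    (hzS : ∀ x, z x ∈ S) (hz_spine : ∀ x ∈ S, z x = x) (hz_leaf : ∀ x ∉ S, G.Adj (z x) x)
    (hz_unique : ∀ x ∉ S, ∀ y ∈ S, G.Adj y x → y = z x)
    (hleaves : ∀ x y, x ∉ S → y ∉ S → ¬ G.Adj x y) (hpos : S.InjOn pos)
    (hpos_adj : ∀ x ∈ S, ∀ y ∈ S, G.Adj x y → pos x = pos y + 1 ∨ pos y = pos x + 1) :
    IsKThin G 1 := by
  classical
  obtain ⟨id, hid⟩ := Countable.exists_injective_nat V
  -- slot `2 i` holds the leaves at spine position `i`, slot `2 i + 1` the spine vertex itself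
  let key : V → ℕ ×ₗ ℕ := fun x => toLex (2 * pos (z x) + if x ∈ S then 1 else 0, id x)
  refine IsKThin.of_injective (f := key) (C := fun _ => 0) (fun u v huv => ?_) ?_
  · exact hid (Prod.ext_iff.mp (toLex_inj.mp huv)).2
  intro u v w huv hvw _ hadj
  have hne_uv : u ≠ v := fun h => huv.ne (congrArg key h)
  have hne_vw : v ≠ w := fun h => hvw.ne (congrArg key h)
  simp only [key, Prod.Lex.toLex_lt_toLex] at huv hvw
  by_cases hw : w ∈ S
  · rw [hz_spine w hw, if_pos hw] at hvw
    have hv_of_pos : v ∉ S → pos (z v) = pos w → G.Adj v w := fun hv h =>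
      hpos (hzS v) hw h ▸ (hz_leaf v hv).symm
    by_cases hu : u ∈ S
    · rw [hz_spine u hu, if_pos hu] at huv
      have hstep := hpos_adj u hu w hw hadj
      by_cases hv : v ∈ S
      · rw [hz_spine v hv, if_pos hv] at huv hvw
        have h1 : pos v ≠ pos u := fun h => hne_uv (hpos hu hv h.symm)
        have h2 : pos v ≠ pos w := fun h => hne_vw (hpos hv hw h)
        omega
      · rw [if_neg hv] at huv hvw
        exact hv_of_pos hv (by omega)
    · rw [if_neg hu, ← hz_unique u hu w hw hadj.symm] at huv
      by_cases hv : v ∈ S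
      · rw [hz_spine v hv, if_pos hv] at huv hvw
        have h2 : pos v ≠ pos w := fun h => hne_vw (hpos hv hw h)
        omega
      · rw [if_neg hv] at huv hvw
        exact hv_of_pos hv (by omega)
  · have hu : u ∈ S := by_contra fun hu => hleaves u w hu hw hadj
    rw [hz_spine u hu, if_pos hu, hz_unique w hw u hu hadj] at huv
    rw [if_neg hw] at hvw
    omega

section Attach

open Classical in
noncomputable def attachKey {R : Set V} (fA : ↥Rᶜ → ℕ) (fR : R → ℕ) (anchor : R → ℕ) (v : V) :
    ℕ ×ₗ ℕ :=
  if hv : v ∈ R then toLex (anchor ⟨v, hv⟩, fR ⟨v, hv⟩ + 1) else toLex (fA ⟨v, hv⟩, 0)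

open Classical in
noncomputable def attachColor {R : Set V} {k : ℕ} (CR : R → Fin k) (v : V) : Fin (k + 1) :=
  if hv : v ∈ R then (CR ⟨v, hv⟩).castSucc else Fin.last k

variable {G : SimpleGraph V} {R : Set V} {fA : ↥Rᶜ → ℕ} {fR : R → ℕ} {anchor : R → ℕ}

lemma attachKey_of_mem (x : R) : attachKey fA fR anchor x = toLex (anchor x, fR x + 1) :=
  dif_pos x.2

lemma attachKey_of_notMem (x : ↥Rᶜ) : attachKey fA fR anchor x = toLex (fA x, 0) :=
  dif_neg x.2

lemma attachColor_of_mem {k : ℕ} {CR : R → Fin k} (x : R) :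
    attachColor CR x = (CR x).castSucc :=
  dif_pos x.2

lemma attachColor_of_notMem {k : ℕ} {CR : R → Fin k} (x : ↥Rᶜ) :
    attachColor CR x = Fin.last k :=
  dif_neg x.2

lemma attachKey_injective (hfA : fA.Injective) (hfR : fR.Injective) :
    (attachKey fA fR anchor).Injective := by
  intro u v huv
  by_cases hu : u ∈ R <;> by_cases hv : v ∈ R
  · rw [attachKey_of_mem ⟨u, hu⟩, attachKey_of_mem ⟨v, hv⟩, toLex_inj, Prod.ext_iff] at huv
    exact congrArg Subtype.val (hfR (Nat.succ_injective huv.2))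
  · rw [attachKey_of_mem ⟨u, hu⟩, attachKey_of_notMem ⟨v, hv⟩, toLex_inj, Prod.ext_iff] at huv
    omega
  · rw [attachKey_of_notMem ⟨u, hu⟩, attachKey_of_mem ⟨v, hv⟩, toLex_inj, Prod.ext_iff] at huv
    omega
  · rw [attachKey_of_notMem ⟨u, hu⟩, attachKey_of_notMem ⟨v, hv⟩, toLex_inj, Prod.ext_iff] at huv
    exact congrArg Subtype.val (hfA huv.1)

lemma consistent_attachKey {k : ℕ} {CA : ↥Rᶜ → Fin 1} {CR : R → Fin k}
    (hA : Consistent (G.induce Rᶜ) (fun u v => fA u < fA v) CA)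
    (hR : Consistent (G.induce R) (fun u v => fR u < fR v) CR)
    (hanchor : ∀ (x : R) (y : ↥Rᶜ), G.Adj x y → anchor x = fA y)
    (hanchor_adj : ∀ x y : R, G.Adj x y → anchor x = anchor y) :
    Consistent G (fun u v => attachKey fA fR anchor u < attachKey fA fR anchor v)
      (attachColor CR) := by
  intro u v w huv hvw hc hadj
  by_cases hu : u ∈ R
  · have hv : v ∈ R := by
      by_contra hv
      rw [attachColor_of_mem ⟨u, hu⟩, attachColor_of_notMem ⟨v, hv⟩] at hc
      exact (Fin.castSucc_lt_last _).ne hc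
    rw [attachColor_of_mem ⟨u, hu⟩, attachColor_of_mem ⟨v, hv⟩] at hc
    rw [attachKey_of_mem ⟨u, hu⟩, attachKey_of_mem ⟨v, hv⟩] at huv
    by_cases hw : w ∈ R
    · rw [attachKey_of_mem ⟨v, hv⟩, attachKey_of_mem ⟨w, hw⟩,
        ← hanchor_adj ⟨u, hu⟩ ⟨w, hw⟩ hadj] at hvw
      simp only [Prod.Lex.toLex_lt_toLex] at huv hvw
      exact hR ⟨u, hu⟩ ⟨v, hv⟩ ⟨w, hw⟩ (by omega) (by omega) (Fin.castSucc_injective _ hc) hadj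
    · rw [attachKey_of_mem ⟨v, hv⟩, attachKey_of_notMem ⟨w, hw⟩,
        ← hanchor ⟨u, hu⟩ ⟨w, hw⟩ hadj] at hvw
      simp only [Prod.Lex.toLex_lt_toLex] at huv hvw
      omega
  · have hv : v ∉ R := by
      intro hv
      rw [attachColor_of_notMem ⟨u, hu⟩, attachColor_of_mem ⟨v, hv⟩] at hc
      exact (Fin.castSucc_lt_last _).ne hc.symm
    rw [attachKey_of_notMem ⟨u, hu⟩, attachKey_of_notMem ⟨v, hv⟩] at huv
    by_cases hw : w ∈ R
    · rw [attachKey_of_notMem ⟨v, hv⟩, attachKey_of_mem ⟨w, hw⟩,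
        hanchor ⟨w, hw⟩ ⟨u, hu⟩ hadj.symm] at hvw
      simp only [Prod.Lex.toLex_lt_toLex] at huv hvw
      omega
    · rw [attachKey_of_notMem ⟨v, hv⟩, attachKey_of_notMem ⟨w, hw⟩] at hvw
      simp only [Prod.Lex.toLex_lt_toLex] at huv hvw
      exact hA ⟨u, hu⟩ ⟨v, hv⟩ ⟨w, hw⟩ (by omega) (by omega) (Subsingleton.elim _ _) hadj

end Attach

lemma isKThin_add_one_of_attachment [Finite V] {G : SimpleGraph V} {R : Set V} {k : ℕ}
    (hA : IsKThin (G.induce Rᶜ) 1) (hR : IsKThin (G.induce R) k)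
    (q : (G.induce R).ConnectedComponent → V)
    (hq : ∀ (x : R) (y : V), y ∉ R → G.Adj x y → y = q ((G.induce R).connectedComponentMk x)) :
    IsKThin G (k + 1) := by
  obtain ⟨fA, hfA, CA, hconsA⟩ := hA.exists_injective_nat
  obtain ⟨fR, hfR, CR, hconsR⟩ := hR.exists_injective_nat
  let gA : V → ℕ := Function.extend Subtype.val fA 0
  have gA_eq : ∀ x : ↥Rᶜ, gA x = fA x := Subtype.val_injective.extend_apply fA 0
  refine IsKThin.of_injective (attachKey_injective hfA hfR)
    (consistent_attachKey (anchor := fun x => gA (q ((G.induce R).connectedComponentMk x)))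
      hconsA hconsR (fun x y hxy => ?_) (fun x y hxy => ?_))
  · rw [← gA_eq, ← hq x y y.2 hxy]
  · simp only [ConnectedComponent.connectedComponentMk_eq_of_adj (G := G.induce R) hxy]

namespace SimpleGraph

variable {G : SimpleGraph V}

lemma Reachable.deleteEdges_of_induce {A : Set V} {u v : A} (h : (G.induce A).Reachable u v)
    {e : Sym2 V} (he : ∃ z ∈ e, z ∉ A) : (G.deleteEdges {e}).Reachable u v := by
  obtain ⟨z, hze, hzA⟩ := he
  let φ : G.induce A →g G.deleteEdges {e} :=
    { toFun := Subtype.val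
      map_rel' := fun {x y} hxy => (deleteEdges_adj ..).mpr ⟨hxy, fun hxye => by
        rw [Set.mem_singleton_iff] at hxye
        rcases Sym2.mem_iff.mp (hxye ▸ hze) with rfl | rfl
        exacts [hzA x.2, hzA y.2]⟩ }
  exact h.map φ

lemma IsAcyclic.eq_of_adj_of_reachable_induce (hG : G.IsAcyclic) {A B : Set V}
    (hAB : Disjoint A B) {x x' y y' : V} {hx : x ∈ A} {hx' : x' ∈ A} {hy : y ∈ B} {hy' : y' ∈ B}
    (hxx' : (G.induce A).Reachable ⟨x, hx⟩ ⟨x', hx'⟩)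
    (hyy' : (G.induce B).Reachable ⟨y', hy'⟩ ⟨y, hy⟩)
    (hxy : G.Adj x y) (hxy' : G.Adj x' y') : x = x' ∧ y = y' := by
  by_contra hne
  -- `x ⟶ x' — y' ⟶ y` would avoid the bridge `xy`
  refine isAcyclic_iff_forall_adj_isBridge.mp hG hxy ?_
  have hx'y' : (G.deleteEdges {s(x, y)}).Adj x' y' := by
    refine (deleteEdges_adj ..).mpr ⟨hxy', fun he => hne ?_⟩
    rcases Sym2.eq_iff.mp (Set.mem_singleton_iff.mp he) with ⟨rfl, rfl⟩ | ⟨rfl, rfl⟩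
    · exact ⟨rfl, rfl⟩
    · exact absurd hx' (hAB.notMem_of_mem_right hy)
  exact ((hxx'.deleteEdges_of_induce ⟨y, Sym2.mem_mk_right x y, hAB.notMem_of_mem_right hy⟩).trans
    hx'y'.reachable).trans
    (hyy'.deleteEdges_of_induce ⟨x, Sym2.mem_mk_left x y, hAB.notMem_of_mem_left hx⟩)

lemma IsAcyclic.exists_attachment (hG : G.IsAcyclic) {R : Set V} (hR : (G.induce Rᶜ).Connected) :
    ∃ q : (G.induce R).ConnectedComponent → V, ∀ (x : R) (y : V), y ∉ R → G.Adj x y →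
      y = q ((G.induce R).connectedComponentMk x) := by
  suffices ∀ c : (G.induce R).ConnectedComponent, ∃ q : V, ∀ (x : R) (y : V),
      (G.induce R).connectedComponentMk x = c → y ∉ R → G.Adj x y → y = q by
    choose q hq using this
    exact ⟨q, fun x y => hq _ x y rfl⟩
  intro c
  by_cases hc : ∃ (x : R) (y : V), (G.induce R).connectedComponentMk x = c ∧ y ∉ R ∧ G.Adj x y
  · obtain ⟨x₀, y₀, rfl, hy₀, hxy₀⟩ := hc
    refine ⟨y₀, fun x y hx hy hxy => ?_⟩
    exact (hG.eq_of_adj_of_reachable_induce disjoint_compl_right (hx' := x₀.2) (hy := hy)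
      (hy' := hy₀) (ConnectedComponent.exact hx) (hR.preconnected _ _) hxy hxy₀).2
  · obtain ⟨x₀, -⟩ := c.exists_rep
    exact ⟨x₀, fun x y hx hy hxy => absurd ⟨x, y, hx, hy, hxy⟩ hc⟩

lemma IsAcyclic.subsingleton_neighborSet_inter (hG : G.IsAcyclic) {S : Set V}
    (hS : (G.induce S).Connected) {x : V} (hx : x ∉ S) : (G.neighborSet x ∩ S).Subsingleton :=
  fun _ hy₁ _ hy₂ => (hG.eq_of_adj_of_reachable_induce disjoint_compl_left (hx := hx) (hx' := hx)
    (hy := hy₁.2) (hy' := hy₂.2) .rfl (hS.preconnected _ _) hy₁.1 hy₂.1).2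

lemma IsAcyclic.not_adj_of_adj_mem (hG : G.IsAcyclic) {S : Set V} (hS : (G.induce S).Connected)
    {x₁ x₂ y₁ y₂ : V} (hx₁ : x₁ ∉ S) (hx₂ : x₂ ∉ S) (hy₁ : y₁ ∈ S) (hy₂ : y₂ ∈ S)
    (h₁ : G.Adj x₁ y₁) (h₂ : G.Adj x₂ y₂) : ¬ G.Adj x₁ x₂ := fun hx =>
  hx.ne (hG.eq_of_adj_of_reachable_induce disjoint_compl_left (hx := hx₁) (hx' := hx₂)
    (hy := hy₁) (hy' := hy₂) (Adj.reachable (G := G.induce Sᶜ) hx) (hS.preconnected _ _) h₁ h₂).1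

lemma IsAcyclic.length_eq_dist (hG : G.IsAcyclic) {u v : V} {p : G.Walk u v} (hp : p.IsPath) :
    p.length = G.dist u v := by
  obtain ⟨q, hq, hql⟩ := p.reachable.exists_path_of_dist
  rw [← hql, show p = q from congrArg Subtype.val ((hG.subsingleton_path u v).elim ⟨p, hp⟩ ⟨q, hq⟩)]

lemma IsAcyclic.injOn_dist_support (hG : G.IsAcyclic) {a b : V} {p : G.Walk a b} (hp : p.IsPath) :
    Set.InjOn (G.dist a) {x | x ∈ p.support} := by
  classical
  intro y₁ h₁ y₂ h₂ h
  rw [← p.getVert_length_takeUntil h₁, ← p.getVert_length_takeUntil h₂,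
    hG.length_eq_dist (hp.takeUntil h₁), hG.length_eq_dist (hp.takeUntil h₂), h]

def closedNbhd (G : SimpleGraph V) (S : Set V) : Set V := {x | x ∈ S ∨ ∃ y ∈ S, G.Adj y x}

lemma Connected.induce_closedNbhd {S : Set V} (hS : (G.induce S).Connected) :
    (G.induce (G.closedNbhd S)).Connected := by
  obtain ⟨u, hu⟩ := hS.nonempty
  refine G.induce_connected_of_patches u (Or.inl hu) fun {v} hv => ?_
  rcases hv with hv | ⟨y, hy, hyv⟩
  · exact ⟨S, fun _ => Or.inl, hu, hv, hS.preconnected _ _⟩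
  · have hSv : (G.induce (S ∪ {v})).Connected := G.connected_induce_union hS.preconnected
      (fun x y => Subsingleton.elim x y ▸ .rfl) hy rfl hyv
    exact ⟨S ∪ {v}, Set.union_subset (fun _ => Or.inl) (Set.singleton_subset_iff.mpr
      (Or.inr ⟨y, hy, hyv⟩)), Or.inl hu, Or.inr rfl, hSv.preconnected _ _⟩

lemma IsTree.isKThin_induce_closedNbhd_support [Finite V] (hG : G.IsTree) {a b : V}
    {p : G.Walk a b} (hp : p.IsPath) : IsKThin (G.induce (G.closedNbhd {x | x ∈ p.support})) 1 := by
  set S : Set V := {x | x ∈ p.support}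
  have hS : (G.induce S).Connected := p.connected_induce_support
  have hanchor : ∀ x : G.closedNbhd S, ∃ y : G.closedNbhd S,
      y.1 ∈ S ∧ (x.1 ∈ S → y = x) ∧ (x.1 ∉ S → G.Adj y x) := by
    intro x
    by_cases hx : x.1 ∈ S
    · exact ⟨x, hx, fun _ => rfl, fun h => absurd hx h⟩
    · obtain ⟨y, hy, hyx⟩ := x.2.resolve_left hx
      exact ⟨⟨y, Or.inl hy⟩, hy, fun h => absurd h hx, fun _ => hyx⟩
  choose z hzS hz_spine hz_leaf using hanchor
  refine isKThin_one_of_caterpillar (S := {x | x.1 ∈ S}) (pos := fun x => G.dist a x)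
    hzS hz_spine hz_leaf (fun x hx y hy hyx => Subtype.ext ?_)
    (fun x y hx hy => hG.isAcyclic.not_adj_of_adj_mem hS hx hy (hzS x) (hzS y)
      (hz_leaf x hx).symm (hz_leaf y hy).symm)
    (fun x hx y hy h => Subtype.ext (hG.isAcyclic.injOn_dist_support hp hx hy h))
    (fun x _ y _ h => hG.dist_eq_dist_add_one_of_adj a h)
  exact hG.isAcyclic.subsingleton_neighborSet_inter hS hx ⟨hyx.symm, hy⟩
    ⟨(hz_leaf x hx).symm, hzS x⟩

end SimpleGraph

theorem path_layout_lemma [Fintype V] (G : SimpleGraph V) (hT : G.IsTree)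
    {a b : V} (p : G.Walk a b) (hp : p.IsPath) (k : ℕ)
    (h : ∀ c : (G.induce {x | ∀ y ∈ p.support, x ≠ y ∧ ¬ G.Adj y x}).ConnectedComponent,
      Thinness ((G.induce {x | ∀ y ∈ p.support, x ≠ y ∧ ¬ G.Adj y x}).induce c.supp) ≤ k) :
    Thinness G ≤ k + 1 := by
  set R : Set V := {x | ∀ y ∈ p.support, x ≠ y ∧ ¬ G.Adj y x}
  have hRc : Rᶜ = G.closedNbhd {x | x ∈ p.support} := by
    ext x
    grind [closedNbhd]
  have hspine : IsKThin (G.induce Rᶜ) 1 := hRc ▸ hT.isKThin_induce_closedNbhd_support hp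
  have hcomp : IsKThin (G.induce R) k :=
    isKThin_of_forall_connectedComponent fun c => IsKThin.of_thinness_le (h c)
  obtain ⟨q, hq⟩ :=
    hT.isAcyclic.exists_attachment (hRc ▸ p.connected_induce_support.induce_closedNbhd)
  exact Nat.sInf_le (isKThin_add_one_of_attachment hspine hcomp q hq)
end

section
/- Let T be a tree and k a natural number. If some vertex w of T has at least three k-neighbors, then thin(T) ≥ k + 1. -/
open SimpleGraph

variable {V : Type*}

/-
Fix an order and a consistent partition of `T` into `t = thin(T) ≤ k` classes. Each of the three
branches `T⟨vᵢ,uᵢ⟩` needs at least `t` classes, so it contains a full cut `mᵢ`: every class is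
the class of `mᵢ` or has an edge of the branch from a vertex `≤ mᵢ` to a vertex `> mᵢ`.
Otherwise, relabelling along the order the classes present at each vertex injectively with
`t - 1` labels, a label being kept as long as its class stays present, would give a consistent
partition of the branch into `t - 1` classes. Let `mⱼ` be the middle one of the three cuts. The
other two lie in the connected part `T⟨vⱼ,w⟩`, which neither meets `T⟨vⱼ,uⱼ⟩` nor is adjacent
to it, so a path between them crosses `mⱼ` along an edge `xy`. Consistency, applied to `x, mⱼ, y`
and to the class of `x` crossing at `mⱼ`, then produces an edge between `T⟨vⱼ,uⱼ⟩` and `x` or `y`.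
-/

open Finset

theorem Finset.exists_injOn_extend {β : Type*} {n : ℕ} (φ : β → ℕ) {P Q : Finset β}
    (hPQ : P ⊆ Q) (hφ : Set.InjOn φ P) (hφn : ∀ b ∈ P, φ b < n) (hQ : #Q ≤ n) :
    ∃ g : β → ℕ, Set.InjOn g Q ∧ (∀ b ∈ Q, g b < n) ∧ Set.EqOn g φ P := by
  classical
  set free := range n \ P.image φ
  have hfree : #(Q \ P) ≤ #free := by
    rw [card_sdiff_of_subset hPQ, card_sdiff_of_subset, card_range, card_image_of_injOn hφ]
    · omega
    · intro x hx
      obtain ⟨b, hb, rfl⟩ := mem_image.1 hx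
      exact mem_range.2 (hφn b hb)
  obtain ⟨ψ, hψ, hψinj⟩ := (Q \ P).finite_toSet.exists_injOn_of_encard_le
    (t := (free : Set ℕ)) (by simpa only [Set.encard_coe_eq_coe_finsetCard, Nat.cast_le])
  have hψ : ∀ b ∈ Q, b ∉ P → ψ b ∈ range n ∧ ψ b ∉ P.image φ :=
    fun b hb hbP => mem_sdiff.1 (hψ (mem_sdiff.2 ⟨hb, hbP⟩))
  refine ⟨fun b => if b ∈ P then φ b else ψ b, ?_, ?_, fun b hb => if_pos hb⟩
  · intro b₁ hb₁ b₂ hb₂ h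
    by_cases h₁ : b₁ ∈ P <;> by_cases h₂ : b₂ ∈ P <;> simp only [h₁, h₂, if_true, if_false] at h
    · exact hφ h₁ h₂ h
    · exact ((hψ b₂ hb₂ h₂).2 (h ▸ mem_image_of_mem φ h₁)).elim
    · exact ((hψ b₁ hb₁ h₁).2 (h ▸ mem_image_of_mem φ h₂)).elim
    · exact hψinj (mem_sdiff.2 ⟨hb₁, h₁⟩) (mem_sdiff.2 ⟨hb₂, h₂⟩) h
  · intro b hb
    dsimp only
    split_ifs with hbP
    · exact hφn b hbP
    · exact mem_range.1 (hψ b hb hbP).1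

section IntervalLabeling

variable {ι β : Type*} [LinearOrder ι] (A : ι → Finset β) (n : ℕ)

def IsIntervalLabeling (s : Finset ι) (f : ι → β → ℕ) : Prop :=
  (∀ i ∈ s, ∀ b ∈ A i, f i b < n) ∧ (∀ i ∈ s, Set.InjOn (f i) (A i)) ∧
    ∀ i ∈ s, ∀ j ∈ s, ∀ b, i ≤ j → (∀ k ∈ s, i ≤ k → k ≤ j → b ∈ A k) → f i b = f j b

variable {A n}

theorem IsIntervalLabeling.exists_insert {s : Finset ι} {f : ι → β → ℕ} {a : ι}
    (hf : IsIntervalLabeling A n s f) (has : ∀ x ∈ s, x < a) (hA : #(A a) ≤ n) :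
    ∃ f', IsIntervalLabeling A n (insert a s) f' := by
  classical
  obtain ⟨hlt, hinj, hrun⟩ := hf
  -- at `a`, the elements of `A a` still present at `max s` keep their labels from there
  obtain ⟨g, hg_inj, hg_lt, hg_eq⟩ : ∃ g : β → ℕ, Set.InjOn g (A a) ∧ (∀ b ∈ A a, g b < n) ∧
      ∀ m ∈ s, (∀ x ∈ s, x ≤ m) → ∀ b ∈ A m, b ∈ A a → g b = f m b := by
    rcases s.eq_empty_or_nonempty with rfl | hs
    · obtain ⟨g, hg_inj, hg_lt, -⟩ :=
        exists_injOn_extend (f a) (empty_subset (A a)) (by simp) (by simp) hA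
      exact ⟨g, hg_inj, hg_lt, by simp⟩
    · have hm₀ := max'_mem s hs
      obtain ⟨g, hg_inj, hg_lt, hg_eq⟩ := exists_injOn_extend (f (s.max' hs)) inter_subset_right
        ((hinj _ hm₀).mono (by simp)) (fun b hb => hlt _ hm₀ b (mem_inter.1 hb).1) hA
      refine ⟨g, hg_inj, hg_lt, fun m hm hmax b hbm hba => ?_⟩
      obtain rfl : m = s.max' hs := le_antisymm (le_max' s m hm) (hmax _ hm₀)
      exact hg_eq (mem_inter.2 ⟨hbm, hba⟩)
  have hne : ∀ i ∈ s, i ≠ a := fun i hi => (has i hi).ne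
  refine ⟨Function.update f a g, ?_, ?_, ?_⟩
  · intro i hi
    rcases mem_insert.1 hi with rfl | hi
    · simpa using hg_lt
    · simpa [hne i hi] using hlt i hi
  · intro i hi
    rcases mem_insert.1 hi with rfl | hi
    · simpa using hg_inj
    · simpa [hne i hi] using hinj i hi
  · intro i hi j hj b hij hb
    have hbs : ∀ k ∈ s, i ≤ k → k ≤ j → b ∈ A k := fun k hk => hb k (mem_insert_of_mem hk)
    rcases mem_insert.1 hi with rfl | his <;> rcases mem_insert.1 hj with rfl | hjs
    · rfl
    · exact absurd hij (has j hjs).not_ge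
    · have hm := max'_mem s ⟨i, his⟩
      have him := le_max' s i his
      rw [Function.update_self, Function.update_of_ne (hne i his),
        hrun i his _ hm b him fun k hk hik hkm => hbs k hk hik (hkm.trans (has _ hm).le)]
      exact (hg_eq _ hm (fun x hx => le_max' s x hx) b (hbs _ hm him (has _ hm).le)
        (hb _ (mem_insert_self _ s) hij le_rfl)).symm
    · rw [Function.update_of_ne (hne i his), Function.update_of_ne (hne j hjs)]
      exact hrun i his j hjs b hij hbs

theorem exists_isIntervalLabeling (hA : ∀ i, #(A i) ≤ n) (s : Finset ι) :
    ∃ f, IsIntervalLabeling A n s f := by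
  induction s using induction_on_max with
  | empty => exact ⟨fun _ _ => 0, by simp [IsIntervalLabeling]⟩
  | insert a s has ih =>
    obtain ⟨f, hf⟩ := ih
    exact hf.exists_insert has (hA a)

end IntervalLabeling

theorem Consistent.isKThin [LinearOrder V] {G : SimpleGraph V} {k : ℕ} {C : V → Fin k}
    (hC : Consistent G (· < ·) C) : IsKThin G k :=
  ⟨(· < ·), inferInstance, C, hC⟩

theorem IsKThin.exists_linearOrder {G : SimpleGraph V} {k : ℕ} (h : IsKThin G k) :
    ∃ (_ : LinearOrder V) (C : V → Fin k), Consistent G (· < ·) C := by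
  classical
  obtain ⟨r, hr, C, hC⟩ := h
  exact ⟨linearOrderOfSTO r, C, hC⟩

theorem isKThin_natCard [Finite V] (G : SimpleGraph V) : IsKThin G (Nat.card V) := by
  let e := Finite.equivFin V
  let _ : LinearOrder V := LinearOrder.lift' e e.injective
  exact Consistent.isKThin (C := e) fun u v _ huv _ hC _ => (huv.ne (e.injective hC)).elim

theorem isKThin_thinness [Finite V] (G : SimpleGraph V) : IsKThin G (Thinness G) :=
  Nat.sInf_mem (s := {k | IsKThin G k}) ⟨_, isKThin_natCard G⟩

theorem IsKThin.thinness_le {G : SimpleGraph V} {k : ℕ} (h : IsKThin G k) : Thinness G ≤ k :=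
  Nat.sInf_le h

section FullCut

variable [LinearOrder V] {t : ℕ} (G : SimpleGraph V) (C : V → Fin t) (S : Set V)

def CrossesAt (c : Fin t) (m : V) : Prop :=
  ∃ x ∈ S, ∃ y ∈ S, G.Adj x y ∧ x ≤ m ∧ m < y ∧ C x = c

def IsFullCut (m : V) : Prop :=
  ∀ c, c = C m ∨ CrossesAt G C S c m

variable {G C S}

theorem exists_isFullCut [Finite V] (hC : Consistent G (· < ·) C) (ht : 0 < t)
    (hS : t ≤ Thinness (G.induce S)) : ∃ m ∈ S, IsFullCut G C S m := by
  classical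
  by_contra! hcut
  let A : S → Finset (Fin t) := fun p => {c | c = C p ∨ CrossesAt G C S c p}
  have hA : ∀ p, #(A p) ≤ t - 1 := by
    intro p
    obtain ⟨c, hc⟩ := not_forall.1 (hcut p p.2)
    calc #(A p) ≤ #(univ.erase c) := card_le_card fun c' hc' =>
            mem_erase.2 ⟨fun h => hc (h ▸ (mem_filter.1 hc').2), mem_univ _⟩
      _ = t - 1 := by simp
  have := Fintype.ofFinite S
  obtain ⟨f, hlt, hinj, hrun⟩ := exists_isIntervalLabeling hA univ
  have hmem : ∀ p, C p ∈ A p := fun p => by simp [A]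
  have hthin : IsKThin (G.induce S) (t - 1) := by
    refine Consistent.isKThin
      (C := fun p => ⟨f p (C p), hlt p (mem_univ _) _ (hmem p)⟩) ?_
    intro u v y huv hvy hf hadj
    -- the edge `u y` keeps the class of `u` crossing all the way from `u` to `v`
    have hcross : ∀ q, u ≤ q → q ≤ v → C u ∈ A q := fun q huq hqv => by
      simp only [A, mem_filter, mem_univ, true_and]
      exact Or.inr ⟨u, u.2, y, y.2, hadj, huq, hqv.trans_lt hvy, rfl⟩
    have hfu := hrun u (mem_univ _) v (mem_univ _) (C u) huv.le fun q _ => hcross q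
    have hCuv : C u = C v :=
      hinj v (mem_univ _) (hcross v huv.le le_rfl) (hmem v) (hfu.symm.trans (Fin.mk.inj_iff.1 hf))
    exact hC u v y huv hvy hCuv hadj
  have := hthin.thinness_le
  omega

theorem IsFullCut.not_adj (hC : Consistent G (· < ·) C) {m : V} (hm : m ∈ S)
    (hcut : IsFullCut G C S m) {x y : V} (hxm : x ≤ m) (hmy : m < y) (hxS : x ∉ S)
    (hx : ∀ s ∈ S, ¬ G.Adj x s) (hy : ∀ s ∈ S, ¬ G.Adj y s) : ¬ G.Adj x y := by
  intro hxy
  have hxm : x < m := hxm.lt_of_ne (ne_of_mem_of_not_mem hm hxS).symm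
  rcases hcut (C x) with hCx | ⟨x', hx', y', hy', hxy', hx'm, hmy', hCx'⟩
  · exact hy m hm (hC x m y hxm hmy hCx hxy).symm
  · rcases lt_trichotomy x' x with hlt | rfl | hgt
    · exact hx y' hy' (hC x' x y' hlt (hxm.trans hmy') hCx' hxy')
    · exact hxS hx'
    · exact hy x' hx' (hC x x' y hgt (hx'm.trans_lt hmy) hCx'.symm hxy).symm

end FullCut

section Dangling

variable {G : SimpleGraph V}

/-- The vertex set of `T⟨v,u⟩`; `DanglingThin G v u` is `Thinness (G.induce (dangling G v u))`. -/
def dangling (G : SimpleGraph V) (v u : V) : Set V :=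
  ((G.deleteEdges {s(v, u)}).connectedComponentMk u).supp

theorem mem_dangling {v u x : V} :
    x ∈ dangling G v u ↔ (G.deleteEdges {s(v, u)}).Reachable x u := by
  simp [dangling, ConnectedComponent.mem_supp_iff, ConnectedComponent.eq]

theorem self_mem_dangling {v u : V} : u ∈ dangling G v u :=
  mem_dangling.2 (Reachable.refl u)

theorem eq_of_adj_of_mem_dangling {v u x y : V} (hx : x ∈ dangling G v u)
    (hy : y ∉ dangling G v u) (hxy : G.Adj x y) : x = u ∧ y = v := by
  by_contra hne
  refine hy (mem_dangling.2 (Adj.reachable ?_ |>.trans (mem_dangling.1 hx)))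
  rw [deleteEdges_adj, Set.mem_singleton_iff, Sym2.eq_iff]
  refine ⟨hxy.symm, ?_⟩
  rintro (⟨hyv, hxu⟩ | ⟨hyu, -⟩)
  · exact hne ⟨hxu, hyv⟩
  · exact hy (hyu ▸ self_mem_dangling)

theorem mem_dangling_of_mem_support {v u x y z : V} (p : (G.deleteEdges {s(v, u)}).Walk x y)
    (hy : y ∈ dangling G v u) (hz : z ∈ p.support) : z ∈ dangling G v u := by
  classical
  exact mem_dangling.2 ((p.dropUntil z hz).reachable.trans (mem_dangling.1 hy))

theorem disjoint_dangling_swap (hG : G.IsAcyclic) {v u : V} (hvu : G.Adj v u) :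
    Disjoint (dangling G v u) (dangling G u v) := by
  refine Set.disjoint_left.2 fun x hxu hxv => ?_
  have hxv := mem_dangling.1 hxv
  rw [Sym2.eq_swap] at hxv
  exact isAcyclic_iff_forall_adj_isBridge.1 hG hvu (hxv.symm.trans (mem_dangling.1 hxu))

theorem notMem_dangling (hG : G.IsAcyclic) {v u : V} (hvu : G.Adj v u) : v ∉ dangling G v u :=
  Set.disjoint_right.1 (disjoint_dangling_swap hG hvu) self_mem_dangling

theorem dangling_subset_dangling (hG : G.IsAcyclic) {v a b : V} (hva : G.Adj v a)
    (hab : a ≠ b) : dangling G v a ⊆ dangling G b v := by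
  intro x hx
  by_contra hxb
  obtain ⟨p⟩ := mem_dangling.1 hx
  have ha : a ∈ dangling G b v := mem_dangling.2 (Adj.reachable (by simp [hva, hva.ne', hab])).symm
  obtain ⟨d, hd, hd₁, hd₂⟩ := p.exists_boundary_dart (dangling G b v)ᶜ hxb (not_not.2 ha)
  have hdv := (eq_of_adj_of_mem_dangling (not_not.1 hd₂) hd₁ (deleteEdges_adj.1 d.adj).1.symm).1
  have hd₂ :=
    mem_dangling_of_mem_support p self_mem_dangling (p.dart_snd_mem_support_of_mem_darts hd)
  rw [hdv] at hd₂
  exact notMem_dangling hG hva hd₂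

theorem disjoint_dangling_of_ne (hG : G.IsAcyclic) {v a b : V} (hva : G.Adj v a)
    (hvb : G.Adj v b) (hab : a ≠ b) : Disjoint (dangling G v a) (dangling G v b) :=
  (disjoint_dangling_swap hG hvb.symm).mono_left (dangling_subset_dangling hG hva hab)

theorem not_adj_of_mem_dangling (hG : G.IsAcyclic) {v a b x y : V} (hva : G.Adj v a)
    (hvb : G.Adj v b) (hab : a ≠ b) (hx : x ∈ dangling G v a) (hy : y ∈ dangling G v b) :
    ¬ G.Adj x y := fun hxy =>
  notMem_dangling hG hvb <| (eq_of_adj_of_mem_dangling hx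
    (Set.disjoint_right.1 (disjoint_dangling_of_ne hG hva hvb hab) hy) hxy).2 ▸ hy

end Dangling

theorem IsFullCut.not_lt_lt [LinearOrder V] {G : SimpleGraph V} {t : ℕ} {C : V → Fin t}
    (hG : G.IsAcyclic) (hC : Consistent G (· < ·) C) {v u w m : V} (hvw : G.Adj v w)
    (hvu : G.Adj v u) (huw : u ≠ w) (hm : m ∈ dangling G v u)
    (hcut : IsFullCut G C (dangling G v u) m) {a b : V} (ha : a ∈ dangling G v w)
    (hb : b ∈ dangling G v w) : ¬ (a < m ∧ m < b) := by
  rintro ⟨ham, hmb⟩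
  obtain ⟨p⟩ := (mem_dangling.1 ha).trans (mem_dangling.1 hb).symm
  obtain ⟨d, hd, hxm, hmy⟩ := p.exists_boundary_dart (Set.Iic m) ham.le (not_le.2 hmb)
  have hx := mem_dangling_of_mem_support p hb (p.dart_fst_mem_support_of_mem_darts hd)
  have hy := mem_dangling_of_mem_support p hb (p.dart_snd_mem_support_of_mem_darts hd)
  exact hcut.not_adj hC hm hxm (not_le.1 hmy)
    (Set.disjoint_left.1 (disjoint_dangling_of_ne hG hvw hvu huw.symm) hx)
    (fun s hs => not_adj_of_mem_dangling hG hvw hvu huw.symm hx hs)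
    (fun s hs => not_adj_of_mem_dangling hG hvw hvu huw.symm hy hs) (deleteEdges_adj.1 d.adj).1

theorem Set.exists_lt_lt_of_two_lt_ncard {α : Type*} [LinearOrder α] {s : Set α}
    (hs : 2 < s.ncard) : ∃ a ∈ s, ∃ b ∈ s, ∃ c ∈ s, a < b ∧ b < c := by
  have hfin := Set.finite_of_ncard_pos (by omega : 0 < s.ncard)
  rw [Set.ncard_eq_toFinset_card _ hfin] at hs
  set t := hfin.toFinset
  have hne : t.Nonempty := card_pos.1 (by omega)
  obtain ⟨b, hb⟩ : ((t.erase (t.min' hne)).erase (t.max' hne)).Nonempty := by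
    have := (t.erase (t.min' hne)).pred_card_le_card_erase (a := t.max' hne)
    have := t.pred_card_le_card_erase (a := t.min' hne)
    exact card_pos.1 (by omega)
  obtain ⟨hbmax, hbmin, hbt⟩ : b ≠ t.max' hne ∧ b ≠ t.min' hne ∧ b ∈ t := by
    simpa only [mem_erase] using hb
  exact ⟨_, hfin.mem_toFinset.1 (t.min'_mem hne), b, hfin.mem_toFinset.1 hbt, _,
    hfin.mem_toFinset.1 (t.max'_mem hne), (t.min'_le b hbt).lt_of_ne' hbmin,
    (t.le_max' b hbt).lt_of_ne hbmax⟩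

theorem saturated_vertex_lower_bound [Fintype V] (G : SimpleGraph V) (hT : G.IsTree)
    (k : ℕ) (w : V) (h : 3 ≤ {v | KNeighbor G k w v}.ncard) :
    k + 1 ≤ Thinness G := by
  by_contra! hk
  have hG := hT.isAcyclic
  obtain ⟨_, C, hC⟩ := (isKThin_thinness G).exists_linearOrder
  set N := {v | KNeighbor G k w v}
  have hcut : ∀ v ∈ N, ∃ u m, G.Adj v u ∧ u ≠ w ∧ m ∈ dangling G v u ∧
      IsFullCut G C (dangling G v u) m := by
    rintro v ⟨-, u, hvu, huw, hku⟩
    obtain ⟨m, hm, hcut⟩ := exists_isFullCut hC (C w).pos ((Nat.lt_succ_iff.1 hk).trans hku)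
    exact ⟨u, m, hvu, huw, hm, hcut⟩
  choose! u m hvu huw hm hcut using hcut
  have hsep : ∀ v ∈ N, ∀ v' ∈ N, v' ≠ v → m v' ∈ dangling G v w := fun v _ v' hv' hne =>
    dangling_subset_dangling hG hv'.1 hne <|
      dangling_subset_dangling hG (hvu v' hv') (huw v' hv') (hm v' hv')
  have hinj : Set.InjOn m N := fun v hv v' hv' heq => by
    by_contra hne
    exact Set.disjoint_left.1 (disjoint_dangling_of_ne hG (hvu v hv) hv.1.symm (huw v hv))
      (hm v hv) (heq ▸ hsep v hv v' hv' (Ne.symm hne))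
  obtain ⟨_, ⟨a, ha, rfl⟩, _, ⟨b, hb, rfl⟩, _, ⟨c, hc, rfl⟩, hab, hbc⟩ :=
    Set.exists_lt_lt_of_two_lt_ncard (s := m '' N) (by rwa [hinj.ncard_image])
  exact (hcut b hb).not_lt_lt hG hC hb.1.symm (hvu b hb) (huw b hb) (hm b hb)
    (hsep b hb a ha (ne_of_apply_ne m hab.ne)) (hsep b hb c hc (ne_of_apply_ne m hbc.ne')) ⟨hab, hbc⟩
end

section
/- Let T be a tree with t ≥ 2 almost-leaves. Then thin(T) ≤ t − 1. -/
open SimpleGraph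

variable {V : Type*}

def IsLeaf (G : SimpleGraph V) (v : V) : Prop := (G.neighborSet v).ncard = 1

def IsAlmostLeaf (G : SimpleGraph V) (v : V) : Prop :=
  ¬ IsLeaf G v ∧ {u | G.Adj v u ∧ ¬ IsLeaf G u}.ncard ≤ 1

/-!
Induct on the size of a convex (that is, connected) vertex set `S` of the tree, showing that `S` is
`max 1 (t_S - 1)`-thin, where `t_S` counts the almost-leaves of `S`. If `t_S ≤ 2`, all non-leaves
lie on one geodesic, so `S` is a caterpillar, which is `1`-thin. Otherwise pick almost-leaves
`a ≠ b`. The geodesic `[a, b]` is `1`-thin, and each branch hanging off it loses the almost-leaves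
`a` and `b` and gains at most one, so by induction it is `(t_S - 2)`-thin. Laying out every branch
right after its attachment vertex, all branches share `t_S - 2` classes on top of the spine's one.
-/

namespace SimpleGraph

variable {G : SimpleGraph V}

def Btw (G : SimpleGraph V) (x y z : V) : Prop := G.dist x y + G.dist y z = G.dist x z

theorem mem_subtree_iff {a c w : V} : w ∈ Subtree G a c ↔ G.Btw a c w := Iff.rfl

section Metric

variable {a x y z : V}

theorem btw_comm : G.Btw x y z ↔ G.Btw z y x := by
  rw [Btw, Btw, dist_comm (u := z) (v := y), dist_comm (u := y) (v := x),
    dist_comm (u := z) (v := x), add_comm]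

theorem btw_self_left : G.Btw x x y := by simp [Btw]

theorem btw_self_right : G.Btw x y y := by simp [Btw]

theorem Btw.trans_left (hG : G.Connected) (hyz : G.Btw a y z) (hxy : G.Btw a x y) :
    G.Btw a x z := by
  have := hG.dist_triangle (u := a) (v := x) (w := z)
  have := hG.dist_triangle (u := x) (v := y) (w := z)
  unfold Btw at *
  omega

theorem Btw.trans_left_right (hG : G.Connected) (hyz : G.Btw a y z) (hxy : G.Btw a x y) :
    G.Btw x y z := by
  have := hG.dist_triangle (u := a) (v := x) (w := z)
  have := hG.dist_triangle (u := x) (v := y) (w := z)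
  unfold Btw at *
  omega

theorem _root_.IsChild.btw (h : IsChild G a x y) : G.Btw a x y := by
  rw [Btw, dist_eq_one_iff_adj.mpr h.1, h.2]

theorem exists_isChild (hG : G.Connected) (hy : y ≠ a) : ∃ x, IsChild G a x y := by
  obtain ⟨p, hp⟩ := hG.exists_walk_length_eq_dist y a
  cases p with
  | nil => exact absurd rfl hy
  | @cons _ x _ hadj q =>
    refine ⟨x, hadj.symm, ?_⟩
    have h₁ : G.dist x a ≤ q.length := dist_le q
    have h₂ := hG.dist_triangle (u := y) (v := x) (w := a)
    rw [dist_eq_one_iff_adj.mpr hadj, Walk.length_cons] at *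
    rw [dist_comm (u := a), dist_comm (u := a)]
    omega

theorem eq_of_btw_self (hG : G.Connected) {a c : V} (h : G.Btw a c a) : c = a := by
  rw [Btw, dist_self] at h
  exact (hG.dist_eq_zero_iff.mp (by omega)).symm

end Metric

section Tree

variable (hT : G.IsTree)
include hT

theorem IsTree.length_eq_dist_of_isPath {u v : V} {p : G.Walk u v} (hp : p.IsPath) :
    p.length = G.dist u v := by
  obtain ⟨q, hq⟩ := hT.connected.exists_walk_length_eq_dist u v
  rw [(hT.existsUnique_path u v).unique hp (q.isPath_of_length_eq_dist hq), hq]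

theorem IsTree.btw_of_mem_support {u v y : V} {p : G.Walk u v} (hp : p.IsPath)
    (hy : y ∈ p.support) : G.Btw u y v := by
  classical
  have hl := congrArg Walk.length (p.take_spec hy)
  rw [Walk.length_append] at hl
  rw [Btw, ← hT.length_eq_dist_of_isPath (hp.takeUntil hy),
    ← hT.length_eq_dist_of_isPath (hp.dropUntil hy), hl, hT.length_eq_dist_of_isPath hp]

theorem IsTree.mem_support_of_btw {u v y : V} (h : G.Btw u y v) {p : G.Walk u v}
    (hp : p.IsPath) : y ∈ p.support := by
  obtain ⟨p₁, hp₁⟩ := hT.connected.exists_walk_length_eq_dist u y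
  obtain ⟨p₂, hp₂⟩ := hT.connected.exists_walk_length_eq_dist y v
  have hW : (p₁.append p₂).length = G.dist u v := by rw [Walk.length_append, hp₁, hp₂, h]
  rw [← (hT.existsUnique_path u v).unique ((p₁.append p₂).isPath_of_length_eq_dist hW) hp,
    Walk.mem_support_append_iff]
  exact Or.inl p₁.end_mem_support

theorem IsTree.btw_total {a v x y : V} (hx : G.Btw a x v) (hy : G.Btw a y v) :
    G.Btw a x y ∨ G.Btw a y x := by
  classical
  obtain ⟨p, hp⟩ := hT.connected.exists_walk_length_eq_dist a v
  have hpath := p.isPath_of_length_eq_dist hp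
  have hxs := hT.mem_support_of_btw hx hpath
  have hys := hT.mem_support_of_btw hy hpath
  rw [← p.take_spec hxs, Walk.mem_support_append_iff] at hys
  rcases hys with hys | hys
  · exact Or.inr (hT.btw_of_mem_support (hpath.takeUntil hxs) hys)
  · have h := hT.btw_of_mem_support (hpath.dropUntil hxs) hys
    have := hT.connected.dist_triangle (u := a) (v := x) (w := y)
    have := hT.connected.dist_triangle (u := a) (v := y) (w := v)
    unfold Btw at *
    exact Or.inl (by omega)

theorem IsTree.eq_of_btw_of_dist_eq {a v x y : V} (hx : G.Btw a x v) (hy : G.Btw a y v)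
    (hd : G.dist a x = G.dist a y) : x = y := by
  rcases hT.btw_total hx hy with h | h <;> unfold Btw at h
  · exact (hT.connected.dist_eq_zero_iff).mp (by omega)
  · exact ((hT.connected.dist_eq_zero_iff).mp (by omega)).symm

theorem IsTree.isChild_unique {a x y v : V} (hx : IsChild G a x v) (hy : IsChild G a y v) :
    x = y :=
  hT.eq_of_btw_of_dist_eq hx.btw hy.btw (by have := hx.2; have := hy.2; omega)

theorem IsTree.btw_tripod {u w x : V} (c : V) (h : G.Btw u x w) : G.Btw u x c ∨ G.Btw c x w := by
  classical
  obtain ⟨p₁, hp₁⟩ := hT.connected.exists_walk_length_eq_dist u c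
  obtain ⟨p₂, hp₂⟩ := hT.connected.exists_walk_length_eq_dist c w
  have hx := (p₁.append p₂).support_toPath_subset_support
    (hT.mem_support_of_btw h (p₁.append p₂).toPath.2)
  rcases (Walk.mem_support_append_iff _ _).mp hx with hx | hx
  · exact Or.inl (hT.btw_of_mem_support (p₁.isPath_of_length_eq_dist hp₁) hx)
  · exact Or.inr (hT.btw_of_mem_support (p₂.isPath_of_length_eq_dist hp₂) hx)

theorem IsTree.isChild_or_isChild_of_adj (a : V) {u w : V} (h : G.Adj u w) :
    IsChild G a u w ∨ IsChild G a w u := by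
  obtain ⟨p, hp⟩ := hT.connected.exists_walk_length_eq_dist w a
  have hpath := p.isPath_of_length_eq_dist hp
  have hdist := dist_eq_one_iff_adj.mpr h
  unfold IsChild
  rw [dist_comm (u := a), dist_comm (u := a)]
  by_cases hu : u ∈ p.support
  · have hb := hT.btw_of_mem_support hpath hu
    unfold Btw at hb
    rw [dist_comm] at hdist
    exact Or.inl ⟨h, by omega⟩
  · have hl := hT.length_eq_dist_of_isPath (hpath.cons (h := h) hu)
    rw [Walk.length_cons] at hl
    exact Or.inr ⟨h.symm, by omega⟩

end Tree

section Convex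

def IsConvex (G : SimpleGraph V) (S : Set V) : Prop :=
  ∀ ⦃u⦄, u ∈ S → ∀ ⦃w⦄, w ∈ S → ∀ ⦃x⦄, G.Btw u x w → x ∈ S

theorem isConvex_univ : G.IsConvex Set.univ := fun _ _ _ _ _ _ => trivial

variable (hT : G.IsTree)
include hT

theorem IsTree.isConvex_setOf_btw (a b : V) : G.IsConvex {x | G.Btw a x b} := by
  have key : ∀ {u w x}, G.Btw a u w → G.Btw a w b → G.Btw u x w → G.Btw a x b := by
    intro u w x huw hwb hx
    have := hT.connected.dist_triangle (u := a) (v := u) (w := x)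
    have := hT.connected.dist_triangle (u := x) (v := w) (w := b)
    have := hT.connected.dist_triangle (u := a) (v := x) (w := b)
    unfold Btw at *
    omega
  intro u hu w hw x hx
  rcases hT.btw_total hu hw with h | h
  · exact key h hw hx
  · exact key h hu (btw_comm.mp hx)

theorem IsTree.isConvex_inter_subtree {S : Set V} (hS : G.IsConvex S) (a c : V) :
    G.IsConvex (S ∩ Subtree G a c) := by
  have key : ∀ {u x}, G.Btw a c u → G.Btw u x c → G.Btw a c x := fun hu hx =>
    btw_comm.mp ((btw_comm.mp hu).trans_left_right hT.connected hx)
  intro u hu w hw x hx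
  refine ⟨hS hu.1 hw.1 hx, ?_⟩
  rcases hT.btw_tripod c hx with h | h
  · exact key hu.2 h
  · exact key hw.2 (btw_comm.mp h)

end Convex

section Leaves

def IsLeafIn (G : SimpleGraph V) (S : Set V) (v : V) : Prop := (S ∩ G.neighborSet v).ncard = 1

def almostLeavesIn (G : SimpleGraph V) (S : Set V) : Set V :=
  {v ∈ S | ¬ G.IsLeafIn S v ∧ {u ∈ S ∩ G.neighborSet v | ¬ G.IsLeafIn S u}.ncard ≤ 1}

theorem almostLeavesIn_univ : G.almostLeavesIn Set.univ = {v | IsAlmostLeaf G v} := by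
  ext v
  simp [almostLeavesIn, IsAlmostLeaf, IsLeafIn, IsLeaf]

/-- A farthest non-leaf is an almost-leaf: its only possible non-leaf neighbour is its parent. -/
theorem IsTree.exists_mem_almostLeavesIn_max_dist [Finite V] (hT : G.IsTree) {S W : Set V}
    (hWS : W ⊆ S) (r : V) (hW : ∀ v ∈ W, ∀ x ∈ S, IsChild G r v x → x ∈ W)
    (hne : ∃ v ∈ W, ¬ G.IsLeafIn S v) :
    ∃ z ∈ W, z ∈ G.almostLeavesIn S ∧ ∀ v ∈ W, ¬ G.IsLeafIn S v → G.dist r v ≤ G.dist r z := by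
  obtain ⟨z, ⟨hzW, hz⟩, hmax⟩ :=
    Set.exists_max_image {v ∈ W | ¬ G.IsLeafIn S v} (G.dist r) (Set.toFinite _) hne
  have hparent : ∀ x ∈ {u ∈ S ∩ G.neighborSet z | ¬ G.IsLeafIn S u}, IsChild G r x z := by
    rintro x ⟨⟨hxS, hadj⟩, hx⟩
    refine (hT.isChild_or_isChild_of_adj r hadj).resolve_left fun hchild => ?_
    have := hmax x ⟨hW z hzW x hxS hchild, hx⟩
    have := hchild.2
    omega
  refine ⟨z, hzW, ⟨hWS hzW, hz, ?_⟩, fun v hv hv' => hmax v ⟨hv, hv'⟩⟩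
  rw [Set.ncard_le_one_iff (Set.toFinite _)]
  exact fun hx hy => hT.isChild_unique (hparent _ hx) (hparent _ hy)

theorem IsLeafIn.anti [Finite V] {S T : Set V} {v : V} (h : G.IsLeafIn S v) (hTS : T ⊆ S)
    (hne : (T ∩ G.neighborSet v).Nonempty) : G.IsLeafIn T v := by
  have := Set.ncard_le_ncard (Set.inter_subset_inter_left (G.neighborSet v) hTS) (Set.toFinite _)
  have := (Set.ncard_pos (Set.toFinite _)).mpr hne
  unfold IsLeafIn at *
  omega

/-- The new almost-leaf `x` is `c` itself or the only neighbour of `c` in `T`. -/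
theorem almostLeavesIn_subset_insert [Finite V] {S T : Set V} (hTS : T ⊆ S) (c : V)
    (hTc : ∀ v ∈ T, v ≠ c → S ∩ G.neighborSet v ⊆ T) :
    ∃ x, G.almostLeavesIn T ⊆ insert x (G.almostLeavesIn S) := by
  have hnbr : ∀ v ∈ T, v ≠ c → T ∩ G.neighborSet v = S ∩ G.neighborSet v := fun v hv hvc =>
    (Set.inter_subset_inter_left _ hTS).antisymm fun u hu => ⟨hTc v hv hvc hu, hu.2⟩
  obtain ⟨x, hxc, hxleaf⟩ : ∃ x, (¬ G.IsLeafIn T c → x = c) ∧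
      (G.IsLeafIn T c → T ∩ G.neighborSet c = {x}) := by
    by_cases hc : G.IsLeafIn T c
    · obtain ⟨x, hx⟩ := Set.ncard_eq_one.mp hc
      exact ⟨x, fun h => absurd hc h, fun _ => hx⟩
    · exact ⟨c, fun _ => rfl, fun h => absurd h hc⟩
  refine ⟨x, fun v ⟨hvT, hvl, hvcount⟩ => or_iff_not_imp_left.mpr fun hvx => ?_⟩
  have hvc : v ≠ c := by
    rintro rfl
    exact hvx (hxc hvl).symm
  have hleaf : ∀ u ∈ T ∩ G.neighborSet v, G.IsLeafIn T u ↔ G.IsLeafIn S u := by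
    intro u hu
    by_cases huc : u = c
    · subst huc
      have hvu : v ∈ T ∩ G.neighborSet u := ⟨hvT, hu.2.symm⟩
      have hul : ¬ G.IsLeafIn T u := fun h => hvx (by simpa [hxleaf h] using hvu)
      exact iff_of_false hul fun h => hul (h.anti hTS ⟨v, hvu⟩)
    · rw [IsLeafIn, IsLeafIn, hnbr u hu.1 huc]
  refine ⟨hTS hvT, by rwa [IsLeafIn, ← hnbr v hvT hvc], ?_⟩
  rw [← hnbr v hvT hvc]
  exact (congrArg Set.ncard (Set.ext fun u => and_congr_right fun hu =>
    not_congr (hleaf u hu).symm)).trans_le hvcount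

end Leaves

section Layout

/-- `IsKThin` restricted to `S`, with the order on `S` given by an injective key `f`. -/
def IsThinOn (G : SimpleGraph V) (S : Set V) (k : ℕ) : Prop :=
  ∃ f C : V → ℕ, S.InjOn f ∧ (∀ v ∈ S, C v < k) ∧
    ∀ u ∈ S, ∀ v ∈ S, ∀ w ∈ S, f u < f v → f v < f w → C u = C v → G.Adj u w → G.Adj v w

variable {S : Set V} {k : ℕ}

theorem isThinOn_empty : G.IsThinOn ∅ k :=
  ⟨0, 0, Set.injOn_empty _, fun _ h => h.elim, fun _ h => h.elim⟩

theorem IsThinOn.mono {k' : ℕ} (h : G.IsThinOn S k) (hk : k ≤ k') : G.IsThinOn S k' := by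
  obtain ⟨f, C, hf, hC, hcons⟩ := h
  exact ⟨f, C, hf, fun v hv => (hC v hv).trans_le hk, hcons⟩

theorem IsThinOn.isKThin (h : G.IsThinOn Set.univ k) : IsKThin G k := by
  obtain ⟨f, C, hf, hC, hcons⟩ := h
  let _ : LinearOrder V := LinearOrder.lift' f (Set.injOn_univ.mp hf)
  refine ⟨(· < ·), inferInstance, fun v => ⟨C v, hC v trivial⟩, ?_⟩
  intro u v w huv hvw hCuv hadj
  exact hcons u trivial v trivial w trivial huv hvw (congrArg Fin.val hCuv) hadj

/-- Keys in any linear order can be replaced by their ranks in `S`. -/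
theorem isThinOn_of_key [Finite V] {L : Type*} [LinearOrder L] (f : V → L) (C : V → ℕ)
    (hf : S.InjOn f) (hC : ∀ v ∈ S, C v < k)
    (hcons : ∀ u ∈ S, ∀ v ∈ S, ∀ w ∈ S, f u < f v → f v < f w → C u = C v →
      G.Adj u w → G.Adj v w) :
    G.IsThinOn S k := by
  set rank : V → ℕ := fun v => {u ∈ S | f u < f v}.ncard
  have rank_lt : ∀ {u v}, u ∈ S → f u < f v → rank u < rank v := fun hu huv =>
    Set.ncard_lt_ncard ⟨fun x hx => ⟨hx.1, hx.2.trans huv⟩, fun h => (h ⟨hu, huv⟩).2.false⟩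
      (Set.toFinite _)
  have rank_le : ∀ {u v}, f u ≤ f v → rank u ≤ rank v := fun huv =>
    Set.ncard_le_ncard (fun x hx => ⟨hx.1, hx.2.trans_le huv⟩) (Set.toFinite _)
  have lt_of_rank_lt : ∀ {u v}, rank u < rank v → f u < f v := fun h =>
    lt_of_not_ge fun h' => (rank_le h').not_gt h
  refine ⟨rank, C, fun u hu v hv huv => hf hu hv ?_, hC, fun u hu v hv w hw huv hvw =>
    hcons u hu v hv w hw (lt_of_rank_lt huv) (lt_of_rank_lt hvw)⟩
  by_contra hne
  rcases lt_or_gt_of_ne hne with h | h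
  · exact (rank_lt hu h).ne huv
  · exact (rank_lt hv h).ne' huv

/-- The blocks `D c` hang off `S₀`, each through a single vertex `q ∈ S₀`. Placing every block
right after its attachment vertex keeps the blocks contiguous, and no vertex of `S₀` lies between
`q` and a block, so the blocks can share one fresh palette of `k₁` classes. -/
theorem IsThinOn.of_blocks [Finite V] {S₀ A : Set V} {D : V → Set V} {k₀ k₁ : ℕ}
    (h₀ : G.IsThinOn S₀ k₀) (hD : ∀ c ∈ A, G.IsThinOn (D c) k₁)
    (hDS₀ : ∀ c ∈ A, ∀ v ∈ D c, v ∉ S₀) (hcover : ∀ v ∈ S, v ∉ S₀ → ∃ c ∈ A, v ∈ D c)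
    (hdisj : ∀ c ∈ A, ∀ c' ∈ A, ∀ v ∈ D c, v ∈ D c' → c = c')
    (hattach : ∀ c ∈ A, ∃ q ∈ S₀, ∀ u ∈ D c, ∀ w ∈ S, G.Adj u w → w ∈ D c ∨ w = q) :
    G.IsThinOn S (k₀ + k₁) := by
  classical
  obtain ⟨f₀, C₀, hf₀, hC₀, hcons₀⟩ := h₀
  choose! g Cb hg hCb hconsb using hD
  choose! q hq hqattach using hattach
  choose! β hβA hβD using hcover
  obtain ⟨e, he⟩ := exists_injective_nat V
  have hβ : ∀ c ∈ A, ∀ v ∈ S, v ∈ D c → β v = c := fun c hc v hv hvD =>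
    hdisj _ (hβA v hv (hDS₀ c hc v hvD)) c hc v (hβD v hv (hDS₀ c hc v hvD)) hvD
  let key : V → ℕ ×ₗ ℕ ×ₗ ℕ := fun v => if v ∈ S₀ then toLex (f₀ v, toLex (0, 0))
    else toLex (f₀ (q (β v)), toLex (e (β v) + 1, g (β v) v))
  let colour : V → ℕ := fun v => if v ∈ S₀ then C₀ v else k₀ + Cb (β v) v
  refine isThinOn_of_key key colour ?_ ?_ ?_
  · intro u hu v hv huv
    by_cases hu₀ : u ∈ S₀ <;> by_cases hv₀ : v ∈ S₀ <;>
      simp only [key, hu₀, hv₀, if_true, if_false, toLex_inj, Prod.mk.injEq] at huv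
    · exact hf₀ hu₀ hv₀ huv.1
    · omega
    · omega
    · have hc : β u = β v := he (by omega)
      rw [hc] at huv
      exact hg _ (hβA v hv hv₀) (hc ▸ hβD u hu hu₀) (hβD v hv hv₀) huv.2.2
  · intro v hv
    by_cases hv₀ : v ∈ S₀
    · simpa [colour, hv₀] using (hC₀ v hv₀).trans_le (Nat.le_add_right k₀ k₁)
    · simpa [colour, hv₀] using hCb _ (hβA v hv hv₀) v (hβD v hv hv₀)
  · intro u hu v hv w hw huv hvw hcol hadj
    by_cases hu₀ : u ∈ S₀
    · have hv₀ : v ∈ S₀ := by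
        by_contra hv₀
        have := hC₀ u hu₀
        simp only [colour, hu₀, hv₀, if_true, if_false] at hcol
        omega
      by_cases hw₀ : w ∈ S₀
      · simp only [key, hu₀, hv₀, hw₀, if_true, Prod.Lex.toLex_lt_toLex] at huv hvw
        simp only [colour, hu₀, hv₀, if_true] at hcol
        exact hcons₀ u hu₀ v hv₀ w hw₀ (by simpa using huv) (by simpa using hvw) hcol hadj
      · have hc := hβA w hw hw₀
        have hqu : u = q (β w) := (hqattach _ hc w (hβD w hw hw₀) u hu hadj.symm).resolve_left
          fun h => hDS₀ _ hc u h hu₀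
        simp only [key, hu₀, hv₀, hw₀, if_true, if_false, Prod.Lex.toLex_lt_toLex, ← hqu] at huv hvw
        omega
    · have hv₀ : v ∉ S₀ := by
        intro hv₀
        have := hC₀ v hv₀
        simp only [colour, hu₀, hv₀, if_true, if_false] at hcol
        omega
      have hc := hβA u hu hu₀
      rcases hqattach _ hc u (hβD u hu hu₀) w hw hadj with hwD | hwq
      · have hw₀ := hDS₀ _ hc w hwD
        have hβw := hβ _ hc w hw hwD
        simp only [key, hu₀, hv₀, hw₀, if_false, Prod.Lex.toLex_lt_toLex, hβw] at huv hvw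
        have hβv : β v = β u := he (by omega)
        simp only [colour, hu₀, hv₀, if_false, hβv] at hcol
        rw [hβv] at huv hvw
        exact hconsb _ hc u (hβD u hu hu₀) v (hβv ▸ hβD v hv hv₀) w hwD
          (by omega) (by omega) (by omega) hadj
      · have hw₀ : q (β u) ∈ S₀ := hq _ hc
        subst hwq
        simp only [key, hu₀, hv₀, hw₀, if_true, if_false, Prod.Lex.toLex_lt_toLex] at huv hvw
        omega

end Layout

section Caterpillar

variable [Finite V] (hT : G.IsTree)
include hT

theorem IsTree.exists_spine_parent {S : Set V} (hS : G.IsConvex S) {a b v : V} (ha : a ∈ S)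
    (hspine : ∀ v ∈ S, ¬ G.IsLeafIn S v → G.Btw a v b) (hv : v ∈ S) (hvP : ¬ G.Btw a v b) :
    ∃ x, G.Btw a x b ∧ IsChild G a x v ∧ ∀ w ∈ S, G.Adj v w → w = x := by
  have hne : ∀ {y}, ¬ G.Btw a y b → y ≠ a := fun hy h => hy (h ▸ btw_self_left)
  obtain ⟨x, hx⟩ := exists_isChild hT.connected (hne hvP)
  have hxS : x ∈ S := hS hv ha (btw_comm.mp hx.btw)
  have hleaf : ∀ {y}, y ∈ S → ¬ G.Btw a y b → (S ∩ G.neighborSet y).ncard = 1 :=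
    fun hy hyP => not_not.mp fun h => hyP (hspine _ hy h)
  have hxP : G.Btw a x b := by
    by_contra hxP
    obtain ⟨y, hy⟩ := exists_isChild hT.connected (hne hxP)
    have hyS : y ∈ S := hS hxS ha (btw_comm.mp hy.btw)
    have hvy : v ≠ y := fun h => by have := hx.2; have := hy.2; subst h; omega
    have := (Set.one_lt_ncard_iff (Set.toFinite (S ∩ G.neighborSet x))).mpr
      ⟨v, y, ⟨hv, hx.1⟩, ⟨hyS, hy.1.symm⟩, hvy⟩
    have := hleaf hxS hxP
    omega
  refine ⟨x, hxP, hx, fun w hw hadj => ?_⟩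
  obtain ⟨z, hz⟩ := Set.ncard_eq_one.mp (hleaf hv hvP)
  have hw' : w ∈ S ∩ G.neighborSet v := ⟨hw, hadj⟩
  have hx' : x ∈ S ∩ G.neighborSet v := ⟨hxS, hx.1.symm⟩
  rw [hz] at hw' hx'
  exact hw'.trans hx'.symm

/-- A caterpillar is `1`-thin: walk along the spine from `a`, listing the pendant leaves of each
spine vertex just before it. -/
theorem IsTree.isThinOn_one_of_btw {S : Set V} (hS : G.IsConvex S) {a b : V} (ha : a ∈ S)
    (hspine : ∀ v ∈ S, ¬ G.IsLeafIn S v → G.Btw a v b) : G.IsThinOn S 1 := by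
  classical
  choose! π hπP hπ hπadj using fun v hv hvP => hT.exists_spine_parent hS ha hspine (v := v) hv hvP
  obtain ⟨e, he⟩ := exists_injective_nat V
  have hP : ∀ {x y}, G.Btw a x b → G.Btw a y b → G.dist a x = G.dist a y → x = y :=
    hT.eq_of_btw_of_dist_eq
  let key : V → ℕ ×ₗ ℕ ×ₗ ℕ := fun v =>
    if G.Btw a v b then toLex (G.dist a v, toLex (1, e v))
    else toLex (G.dist a (π v), toLex (0, e v))
  refine isThinOn_of_key key 0 (fun u _ v _ huv => he ?_) (fun _ _ => Nat.one_pos) ?_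
  · by_cases hu : G.Btw a u b <;> by_cases hv : G.Btw a v b <;>
      simp only [key, hu, hv, if_true, if_false, toLex_inj, Prod.mk.injEq] at huv <;> omega
  intro u hu v hv w hw huv hvw _ hadj
  have huv' : u ≠ v := fun h => huv.ne (congrArg key h)
  have hvw' : v ≠ w := fun h => hvw.ne (congrArg key h)
  have hchild : ∀ {x}, v ∈ S → ¬ G.Btw a v b → π v = x → G.Adj v x := fun hv hvP h =>
    h ▸ (hπ v hv hvP).1.symm
  by_cases huP : G.Btw a u b
  · by_cases hwP : G.Btw a w b
    · have hd : G.dist a u + 1 = G.dist a w ∨ G.dist a w + 1 = G.dist a u :=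
        (hT.isChild_or_isChild_of_adj a hadj).imp (·.2) (·.2)
      by_cases hvP : G.Btw a v b
      · have h₁ : G.dist a u ≠ G.dist a v := fun h => huv' (hP huP hvP h)
        have h₂ : G.dist a v ≠ G.dist a w := fun h => hvw' (hP hvP hwP h)
        simp only [key, huP, hvP, hwP, if_true, Prod.Lex.toLex_lt_toLex] at huv hvw
        omega
      · simp only [key, huP, hvP, hwP, if_true, if_false, Prod.Lex.toLex_lt_toLex] at huv hvw
        exact hchild hv hvP (hP (hπP v hv hvP) hwP (by omega))
    · have huw := huv.trans hvw
      simp only [key, huP, hwP, if_true, if_false, Prod.Lex.toLex_lt_toLex,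
        ← hπadj w hw hwP u hu hadj.symm] at huw
      omega
  · obtain rfl : w = π u := hπadj u hu huP w hw hadj
    have hwP := hπP u hu huP
    by_cases hvP : G.Btw a v b
    · have h : G.dist a v ≠ G.dist a (π u) := fun h => hvw' (hP hvP hwP h)
      simp only [key, huP, hvP, hwP, if_true, if_false, Prod.Lex.toLex_lt_toLex] at huv hvw
      omega
    · simp only [key, huP, hvP, hwP, if_true, if_false, Prod.Lex.toLex_lt_toLex] at huv hvw
      exact hchild hv hvP (hP (hπP v hv hvP) hwP (by omega))

/-- Take an almost-leaf `a` and a non-leaf `b` farthest from it: a non-leaf off `[a, b]` would have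
a third almost-leaf beyond it. -/
theorem IsTree.exists_spine_of_ncard_almostLeavesIn_le_two {S : Set V} (hne : S.Nonempty)
    (h : (G.almostLeavesIn S).ncard ≤ 2) :
    ∃ a ∈ S, ∃ b, ∀ v ∈ S, ¬ G.IsLeafIn S v → G.Btw a v b := by
  by_cases hleaf : ∃ y ∈ S, ¬ G.IsLeafIn S y
  swap
  · obtain ⟨a, ha⟩ := hne
    exact ⟨a, ha, a, fun v hv hv' => absurd ⟨v, hv, hv'⟩ hleaf⟩
  obtain ⟨y, hy⟩ := hleaf
  obtain ⟨a, haS, ha, -⟩ := hT.exists_mem_almostLeavesIn_max_dist subset_rfl y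
    (fun _ _ x hx _ => hx) ⟨y, hy⟩
  obtain ⟨b, -, hb, hbmax⟩ := hT.exists_mem_almostLeavesIn_max_dist subset_rfl a
    (fun _ _ x hx _ => hx) ⟨y, hy⟩
  refine ⟨a, haS, b, fun x hxS hx => by_contra fun hxP => ?_⟩
  have hxa : x ≠ a := fun h => hxP (h ▸ btw_self_left)
  obtain ⟨z, ⟨-, hxz⟩, hz, -⟩ := hT.exists_mem_almostLeavesIn_max_dist
    (W := {v ∈ S | G.Btw a x v}) (Set.sep_subset _ _) a
    (fun v hv w hw hvw => ⟨hw, hvw.btw.trans_left hT.connected hv.2⟩) ⟨x, ⟨hxS, btw_self_right⟩, hx⟩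
  have hab : a ≠ b := by
    rintro rfl
    have := hbmax x hxS hx
    exact hxa (hT.connected.dist_eq_zero_iff.mp (by simpa using this)).symm
  have hza : z ≠ a := by
    rintro rfl
    exact hxa (eq_of_btw_self hT.connected hxz)
  have hzb : z ≠ b := by
    rintro rfl
    exact hxP hxz
  have h₃ : ({a, b, z} : Set V).ncard = 3 :=
    Set.ncard_eq_three.mpr ⟨a, b, z, hab, hza.symm, hzb.symm, rfl⟩
  have := Set.ncard_le_ncard (s := {a, b, z}) (t := G.almostLeavesIn S)
    (by simp [Set.insert_subset_iff, ha, hb, hz])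
  omega

end Caterpillar

section Branches

def IsBranchRoot (G : SimpleGraph V) (a b c : V) : Prop :=
  ¬ G.Btw a c b ∧ ∃ q, G.Btw a q b ∧ IsChild G a q c

variable (hT : G.IsTree) {a b c c' u v w : V}
include hT

theorem IsTree.not_btw_of_isBranchRoot (hc : G.IsBranchRoot a b c) (hv : G.Btw a c v) :
    ¬ G.Btw a v b :=
  fun h => hc.1 (h.trans_left hT.connected hv)

theorem IsTree.left_not_mem_subtree (hc : G.IsBranchRoot a b c) : a ∉ Subtree G a c :=
  fun h => hc.1 (eq_of_btw_self hT.connected h ▸ btw_self_left)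

theorem IsTree.isBranchRoot_of_adj {q : V} (hc : ¬ G.Btw a c b) (hq : G.Btw a q b)
    (hadj : G.Adj q c) : G.IsBranchRoot a b c :=
  ⟨hc, q, hq, (hT.isChild_or_isChild_of_adj a hadj).resolve_right fun h =>
    hc (hq.trans_left hT.connected h.btw)⟩

theorem IsTree.isBranchRoot_eq_of_btw (hc : G.IsBranchRoot a b c) (hc' : G.IsBranchRoot a b c')
    (h : G.Btw a c' c) : c' = c := by
  obtain ⟨q, hq, hqc⟩ := hc.2
  rcases hT.btw_total h hqc.btw with h' | h'
  · exact absurd (hq.trans_left hT.connected h') hc'.1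
  · have := hqc.2
    have := dist_eq_one_iff_adj.mpr hqc.1
    unfold Btw at h h'
    by_cases hcc : G.dist c' c = 0
    · exact hT.connected.dist_eq_zero_iff.mp hcc
    · have hqc' : q = c' := hT.connected.dist_eq_zero_iff.mp (by omega)
      exact absurd (hqc' ▸ hq) hc'.1

theorem IsTree.isBranchRoot_unique (hc : G.IsBranchRoot a b c) (hc' : G.IsBranchRoot a b c')
    (hv : G.Btw a c v) (hv' : G.Btw a c' v) : c = c' :=
  (hT.btw_total hv hv').elim (hT.isBranchRoot_eq_of_btw hc' hc)
    fun h => (hT.isBranchRoot_eq_of_btw hc hc' h).symm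

theorem IsTree.exists_isBranchRoot (hv : ¬ G.Btw a v b) :
    ∃ c, G.IsBranchRoot a b c ∧ G.Btw a c v := by
  induction hd : G.dist a v using Nat.strong_induction_on generalizing v with
  | _ n ih =>
  obtain ⟨x, hx⟩ := exists_isChild hT.connected fun h : v = a => hv (h ▸ btw_self_left)
  by_cases hxP : G.Btw a x b
  · exact ⟨v, ⟨hv, x, hxP, hx⟩, btw_self_right⟩
  · obtain ⟨c, hc, hcx⟩ := ih _ (by have := hx.2; omega) hxP rfl
    exact ⟨c, hc, hx.btw.trans_left hT.connected hcx⟩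

theorem IsTree.mem_subtree_or_eq_of_adj {q : V} (hq : IsChild G a q c) (hu : u ∈ Subtree G a c)
    (hadj : G.Adj u w) : w ∈ Subtree G a c ∨ w = q := by
  rw [mem_subtree_iff] at hu ⊢
  rcases hT.isChild_or_isChild_of_adj a hadj with h | h
  · exact Or.inl (h.btw.trans_left hT.connected hu)
  rcases hT.btw_total hu h.btw with h' | h'
  · exact Or.inl h'
  have := h.2
  have := dist_eq_one_iff_adj.mpr hadj
  unfold Btw at hu h'
  by_cases hwc : G.dist w c = 0
  · obtain rfl := hT.connected.dist_eq_zero_iff.mp hwc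
    exact Or.inl btw_self_right
  · have hcu : c = u := hT.connected.dist_eq_zero_iff.mp (by omega)
    subst hcu
    exact Or.inr (hT.isChild_unique h hq)

theorem IsTree.mem_subtree_of_adj_of_isBranchRoot (hc : G.IsBranchRoot a b c)
    (hv : v ∈ Subtree G a c) (hvc : v ≠ c) (hadj : G.Adj v w) : w ∈ Subtree G a c := by
  obtain ⟨q, hq, hqc⟩ := hc.2
  refine (hT.mem_subtree_or_eq_of_adj hqc hv hadj).resolve_right ?_
  rintro rfl
  have hv' := hT.isBranchRoot_of_adj (hT.not_btw_of_isBranchRoot hc hv) hq hadj.symm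
  exact hvc (hT.isBranchRoot_unique hc hv' hv btw_self_right).symm

theorem IsTree.ncard_almostLeavesIn_inter_subtree_lt [Finite V] {S : Set V}
    (ha : a ∈ G.almostLeavesIn S) (hb : b ∈ G.almostLeavesIn S) (hab : a ≠ b)
    (hc : G.IsBranchRoot a b c) :
    (G.almostLeavesIn (S ∩ Subtree G a c)).ncard < (G.almostLeavesIn S).ncard := by
  obtain ⟨x, hx⟩ := almostLeavesIn_subset_insert (G := G) Set.inter_subset_left c
    fun v hv hvc u hu => ⟨hu.1, hT.mem_subtree_of_adj_of_isBranchRoot hc hv.2 hvc hu.2⟩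
  have hsub : G.almostLeavesIn (S ∩ Subtree G a c) ⊆ insert x (G.almostLeavesIn S \ {a, b}) := by
    intro v hv
    refine (hx hv).imp_right fun h => ⟨h, ?_⟩
    rintro (rfl | rfl)
    · exact hT.left_not_mem_subtree hc hv.1.2
    · exact hT.not_btw_of_isBranchRoot hc hv.1.2 btw_self_right
  have hab' : ({a, b} : Set V) ⊆ G.almostLeavesIn S := Set.insert_subset_iff.mpr ⟨ha, by simpa⟩
  have h₁ := Set.ncard_le_ncard hsub (Set.toFinite _)
  have h₂ := Set.ncard_insert_le x (G.almostLeavesIn S \ {a, b})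
  have h₃ := Set.ncard_le_ncard hab' (Set.toFinite _)
  rw [Set.ncard_sdiff hab'] at h₂
  rw [Set.ncard_pair hab] at h₂ h₃
  omega

end Branches

theorem IsTree.isThinOn_max_one_ncard_almostLeavesIn_sub_one [Finite V] (hT : G.IsTree)
    {S : Set V} (hS : G.IsConvex S) :
    G.IsThinOn S (max 1 ((G.almostLeavesIn S).ncard - 1)) := by
  induction hn : S.ncard using Nat.strong_induction_on generalizing S with
  | _ n ih =>
  by_cases hsmall : (G.almostLeavesIn S).ncard ≤ 2
  · rcases S.eq_empty_or_nonempty with rfl | hne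
    · exact isThinOn_empty
    obtain ⟨a, ha, b, hspine⟩ := hT.exists_spine_of_ncard_almostLeavesIn_le_two hne hsmall
    exact (hT.isThinOn_one_of_btw hS ha hspine).mono (le_max_left _ _)
  obtain ⟨a, b, ha, hb, hab⟩ := (Set.one_lt_ncard_iff (s := G.almostLeavesIn S)).mp (by omega)
  have hbranch : ∀ c, G.IsBranchRoot a b c →
      G.IsThinOn (S ∩ Subtree G a c) ((G.almostLeavesIn S).ncard - 2) := by
    intro c hc
    have hlt : (S ∩ Subtree G a c).ncard < n := hn ▸ Set.ncard_lt_ncard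
      ⟨Set.inter_subset_left, fun h => hT.left_not_mem_subtree hc (h ha.1).2⟩
    have := hT.ncard_almostLeavesIn_inter_subtree_lt ha hb hab hc
    exact (ih _ hlt (hT.isConvex_inter_subtree hS a c) rfl).mono (by omega)
  refine (IsThinOn.of_blocks (S₀ := {x | G.Btw a x b}) (A := {c | G.IsBranchRoot a b c})
    (hT.isThinOn_one_of_btw (hT.isConvex_setOf_btw a b) btw_self_left fun _ hv _ => hv) hbranch
    (fun c hc v hv => hT.not_btw_of_isBranchRoot hc hv.2)
    (fun v hv hvP => (hT.exists_isBranchRoot hvP).imp fun c hc => ⟨hc.1, hv, hc.2⟩)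
    (fun c hc c' hc' v hv hv' => hT.isBranchRoot_unique hc hc' hv.2 hv'.2)
    (fun c hc => ?_)).mono (by omega)
  obtain ⟨q, hq, hqc⟩ := hc.2
  exact ⟨q, hq, fun u hu w hw hadj =>
    (hT.mem_subtree_or_eq_of_adj hqc hu.2 hadj).imp_left fun h => ⟨hw, h⟩⟩

end SimpleGraph

theorem thinness_le_almost_leaves [Fintype V] (G : SimpleGraph V) (hT : G.IsTree)
    (t : ℕ) (ht : {v | IsAlmostLeaf G v}.ncard = t) (ht2 : 2 ≤ t) :
    Thinness G ≤ t - 1 := by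
  have h := hT.isThinOn_max_one_ncard_almostLeavesIn_sub_one isConvex_univ
  rw [almostLeavesIn_univ, ht, max_eq_right (by omega)] at h
  exact Nat.sInf_le h.isKThin
end

section
/- Let T be the complete binary tree of height h. Then thin(T) = ⌈(h+1)/3⌉. -/
open SimpleGraph

variable {V : Type*}

def IsCompleteMAryTree (G : SimpleGraph V) (rt : V) (m h : ℕ) : Prop :=
  G.IsTree ∧ ∀ v : V,
    {c | IsChild G rt v c}.ncard = m ∨ ({c | IsChild G rt v c} = ∅ ∧ G.dist rt v = h)

/-!
A complete binary tree of height `h` is isomorphic to the tree of binary words of length at most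
`h`, a word being adjacent to its one-letter extensions, so it suffices to compute the thinness
of that word tree.

Upper bound: cut every word into blocks of three letters. The class of a word is its number of
complete blocks, and words are ordered lexicographically by the codes (`key`) of their blocks.
Within a band of three levels this order interleaves the vertices of the band with the subtrees
hanging below it so that whenever `u ≺ v ≺ w`, `u` and `v` lie in the same band and `u ~ w`, also
`v ~ w`; once the complete blocks shared by `u` and `w` are discarded, this is a finite check.

Lower bound: say `a ≺ b` are in conflict if some `w ≻ b` is adjacent to `a` but not to `b`; such
`a` and `b` need different classes. By induction on `j`, the subtree of depth `3j` below any word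
`p` contains `j + 1` pairwise conflicting vertices whose conflicts are witnessed inside it. Take
such chains below `p000`, `p010` and `p100`, with largest elements `e₁, e₂, e₃`. The subtree of `p`
minus the subtree of `p00` is connected and has no edge into the subtree of `p000`; if it has
vertices on both sides of `e₁`, an edge crossing `e₁` supplies a new member of the first chain.
Otherwise each of the three connected sets lies on one side of its `eᵢ` and contains the other two
`eⱼ`, and two of them lying on the same side give `eᵢ ≺ eⱼ ≺ eᵢ`.
-/

section Thinness

variable {W : Type*} {G : SimpleGraph V} {G' : SimpleGraph W}

theorem IsKThin.of_iso (e : G ≃g G') {k : ℕ} (hk : IsKThin G k) : IsKThin G' k := by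
  obtain ⟨r, hr, C, hC⟩ := hk
  refine ⟨Function.onFun r e.symm, Function.Injective.isStrictTotalOrder_onFun r e.symm.injective,
    C ∘ e.symm, ?_⟩
  intro u v w huv hvw hCuv huw
  exact e.symm.map_adj_iff.1 (hC _ _ _ huv hvw hCuv (e.symm.map_adj_iff.2 huw))

theorem SimpleGraph.Iso.thinness_eq (e : G ≃g G') : Thinness G = Thinness G' :=
  congrArg sInf (Set.ext fun _ => ⟨IsKThin.of_iso e, IsKThin.of_iso e.symm⟩)

end Thinness

theorem List.append_lt_append_left_iff {α : Type*} [Preorder α] (M : List α) {s t : List α} :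
    M ++ s < M ++ t ↔ s < t := by
  induction M with
  | nil => rfl
  | cons m M ih => simp [ih]

theorem List.eq_and_lt_of_cons_lt_of_lt_cons {α : Type*} [LinearOrder α] {a b : α}
    {s r t : List α} (h₁ : a :: s < b :: r) (h₂ : b :: r < a :: t) : b = a ∧ s < r ∧ r < t := by
  rw [List.cons_lt_cons_iff] at h₁ h₂
  rcases h₁ with h₁ | ⟨rfl, h₁⟩
  · rcases h₂ with h₂ | ⟨rfl, _⟩
    · exact absurd h₁ h₂.not_gt
    · exact absurd h₁ (lt_irrefl _)
  · rcases h₂ with h₂ | ⟨-, h₂⟩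
    · exact absurd h₂ (lt_irrefl _)
    · exact ⟨rfl, h₁, h₂⟩

section ConflictChain

variable (G : SimpleGraph V) (r : V → V → Prop)

def Conflict (D : Set V) (a b : V) : Prop :=
  r a b ∧ ∃ w ∈ D, r b w ∧ G.Adj a w ∧ ¬ G.Adj b w

def IsConflictChain (D : Set V) (S : Finset V) (e : V) : Prop :=
  e ∈ S ∧ ↑S ⊆ D ∧ (∀ q ∈ S, q ≠ e → r q e) ∧ ∀ a ∈ S, ∀ b ∈ S, r a b → Conflict G r D a b

variable {G r} [IsStrictTotalOrder V r] {D E Z : Set V} {S : Finset V} {e : V}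

theorem IsConflictChain.card_le (hS : IsConflictChain G r D S e) {k : ℕ} {C : V → Fin k}
    (hC : Consistent G r C) : S.card ≤ k := by
  have hne : ∀ a ∈ S, ∀ b ∈ S, r a b → C a ≠ C b := fun a ha b hb hab hCab =>
    let ⟨_, _, _, hbw, haw, hbw'⟩ := hS.2.2.2 a ha b hb hab
    hbw' (hC a b _ hab hbw hCab haw)
  have hinj : Set.InjOn C S := fun a ha b hb hCab => by
    rcases trichotomous_of r a b with hab | hab | hab
    · exact absurd hCab (hne a ha b hb hab)
    · exact hab
    · exact absurd hCab.symm (hne b hb a ha hab)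
  simpa using Finset.card_le_card_of_injOn C (fun _ _ => Finset.mem_coe.2 (Finset.mem_univ _)) hinj

theorem IsConflictChain.insert [DecidableEq V] (hS : IsConflictChain G r D S e) (hDE : D ⊆ E)
    {z x : V} (hzE : z ∈ E) (hxE : x ∈ E) (hzD : ∀ y ∈ D, ¬ G.Adj z y)
    (hxD : ∀ y ∈ D, ¬ G.Adj x y) (hzx : G.Adj z x) (hze : r z e) (hex : r e x) :
    IsConflictChain G r E (insert z S) e := by
  obtain ⟨heS, hSD, htop, hconf⟩ := hS
  have hle : ∀ q ∈ S, q = e ∨ r q e := fun q hq => (eq_or_ne q e).imp_right (htop q hq)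
  refine ⟨Finset.mem_insert_of_mem heS, ?_, ?_, ?_⟩
  · rw [Finset.coe_insert]
    exact Set.insert_subset hzE (hSD.trans hDE)
  · intro q hq hqe
    rcases Finset.mem_insert.1 hq with rfl | hq
    exacts [hze, htop q hq hqe]
  · intro a ha b hb hab
    rcases Finset.mem_insert.1 ha with rfl | haS <;> rcases Finset.mem_insert.1 hb with rfl | hbS
    · exact absurd hab (irrefl _)
    · refine ⟨hab, x, hxE, ?_, hzx, fun hbx => hxD b (hSD hbS) hbx.symm⟩
      rcases hle b hbS with rfl | hbe
      exacts [hex, _root_.trans hbe hex]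
    · obtain ⟨-, w, hwD, hew, haw, -⟩ :=
        hconf a haS e heS ((hle a haS).resolve_left fun hae => asymm hze (hae ▸ hab))
      exact ⟨hab, w, hDE hwD, _root_.trans hze hew, haw, hzD w hwD⟩
    · obtain ⟨hab, w, hwD, hbw, haw, hbw'⟩ := hconf a haS b hbS hab
      exact ⟨hab, w, hDE hwD, hbw, haw, hbw'⟩

theorem SimpleGraph.Preconnected.exists_adj_across (hZ : (G.induce Z).Preconnected) {a b m : V}
    (ha : a ∈ Z) (hb : b ∈ Z) (hm : m ∉ Z) (ham : r a m) (hmb : r m b) :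
    ∃ z ∈ Z, ∃ x ∈ Z, G.Adj z x ∧ r z m ∧ r m x := by
  obtain ⟨p⟩ := hZ ⟨a, ha⟩ ⟨b, hb⟩
  obtain ⟨d, -, hd₁, hd₂⟩ := p.exists_boundary_dart {y | r y m} ham (asymm hmb)
  refine ⟨d.fst, d.fst.2, d.snd, d.snd.2, d.adj, hd₁, ?_⟩
  rcases trichotomous_of r d.snd.1 m with h | h | h
  exacts [absurd h hd₂, absurd (h ▸ d.snd.2) hm, h]

theorem IsConflictChain.exists_card_succ_or (hS : IsConflictChain G r D S e) (hDE : D ⊆ E)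
    (hZE : Z ⊆ E) (hZD : Disjoint Z D) (hZadj : ∀ z ∈ Z, ∀ y ∈ D, ¬ G.Adj z y)
    (hZ : (G.induce Z).Preconnected) :
    (∃ S', IsConflictChain G r E S' e ∧ S'.card = S.card + 1) ∨
      (∀ z ∈ Z, r z e) ∨ ∀ z ∈ Z, r e z := by
  classical
  by_cases hbelow : ∀ z ∈ Z, r z e
  · exact Or.inr (Or.inl hbelow)
  by_cases habove : ∀ z ∈ Z, r e z
  · exact Or.inr (Or.inr habove)
  left
  have heZ : e ∉ Z := fun heZ => hZD.ne_of_mem heZ (hS.2.1 hS.1) rfl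
  push Not at hbelow habove
  obtain ⟨a, ha, hea⟩ := habove
  obtain ⟨b, hb, hbe⟩ := hbelow
  have hne : ∀ y ∈ Z, y ≠ e := fun y hy h => heZ (h ▸ hy)
  obtain ⟨z, hz, x, hx, hzx, hze, hex⟩ := hZ.exists_adj_across ha hb heZ
    ((trichotomous_of r a e).resolve_right (not_or.2 ⟨hne a ha, hea⟩))
    ((trichotomous_of r e b).resolve_right (not_or.2 ⟨(hne b hb).symm, hbe⟩))
  have hzS : z ∉ S := fun hzS => hZD.ne_of_mem hz (hS.2.1 hzS) rfl
  exact ⟨Insert.insert z S, hS.insert hDE (hZE hz) (hZE hx) (hZadj z hz) (hZadj x hx) hzx hze hex,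
    Finset.card_insert_of_notMem hzS⟩

end ConflictChain

theorem false_of_forall_side {ι : Type*} [Fintype ι] (hι : 2 < Fintype.card ι)
    {r : V → V → Prop} [IsStrictTotalOrder V r] {Z : ι → Set V} {e : ι → V}
    (hmem : ∀ i j, i ≠ j → e j ∈ Z i)
    (hside : ∀ i, (∀ z ∈ Z i, r z (e i)) ∨ ∀ z ∈ Z i, r (e i) z) : False := by
  classical
  obtain ⟨i, j, hij, hsame⟩ :=
    Fintype.exists_ne_map_eq_of_card_lt (fun i => ∀ z ∈ Z i, r z (e i)) (by simpa using hι)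
  by_cases hi : ∀ z ∈ Z i, r z (e i)
  · have hj : ∀ z ∈ Z j, r z (e j) := hsame ▸ hi
    exact asymm (hi _ (hmem i j hij)) (hj _ (hmem j i hij.symm))
  · have hj : ¬ ∀ z ∈ Z j, r z (e j) := hsame ▸ hi
    exact asymm ((hside i).resolve_left hi _ (hmem i j hij))
      ((hside j).resolve_left hj _ (hmem j i hij.symm))

section RootedTree

variable {G : SimpleGraph V} {rt : V} {h : ℕ}

theorem SimpleGraph.IsTree.exists_isChild (hT : G.IsTree) {v : V} (hv : v ≠ rt) :
    ∃ u, IsChild G rt u v := by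
  obtain ⟨p, hp⟩ := hT.connected.exists_walk_length_eq_dist v rt
  cases p with
  | nil => exact absurd rfl hv
  | @cons _ u _ hadj q =>
    have hq : G.dist rt u ≤ q.length := dist_comm (G := G) ▸ dist_le q
    rw [Walk.length_cons, dist_comm] at hp
    refine ⟨u, hadj.symm, ?_⟩
    have := hT.dist_eq_dist_add_one_of_adj rt hadj
    omega

theorem SimpleGraph.IsTree.isChild_unique_s11 (hT : G.IsTree) {u₁ u₂ v : V}
    (h₁ : IsChild G rt u₁ v) (h₂ : IsChild G rt u₂ v) : u₁ = u₂ := by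
  classical
  obtain ⟨p, hp, -⟩ := hT.connected.exists_path_of_dist rt v
  have hpen : ∀ u, IsChild G rt u v → u = p.penultimate := by
    rintro u ⟨hadj, hdist⟩
    obtain ⟨q, hq, hqlen⟩ := hT.connected.exists_path_of_dist rt u
    have hvq : v ∉ q.support := fun hv => by
      have := dist_le (q.takeUntil v hv)
      have := q.length_takeUntil_le_length hv
      omega
    exact hT.isAcyclic.eq_penultimate_of_adj_end hp hadj.symm
      (hT.isAcyclic.mem_support_of_ne_mem_support_of_adj_of_isPath hp hq hadj.symm hvq)
  rw [hpen u₁ h₁, hpen u₂ h₂]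

theorem SimpleGraph.IsTree.adj_iff_isChild_or_isChild (hT : G.IsTree) (rt : V) {u v : V} :
    G.Adj u v ↔ IsChild G rt u v ∨ IsChild G rt v u :=
  ⟨fun huv => (hT.dist_eq_dist_add_one_of_adj rt huv).elim (fun h => Or.inr ⟨huv.symm, h.symm⟩)
    (fun h => Or.inl ⟨huv, h.symm⟩), fun h => h.elim (·.1) (·.1.symm)⟩

namespace IsCompleteMAryTree

variable {m : ℕ}

theorem dist_le [Finite V] (hG : IsCompleteMAryTree G rt m h) (hm : m ≠ 0) (v : V) :
    G.dist rt v ≤ h := by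
  have : Nonempty V := ⟨v⟩
  obtain ⟨w, hw⟩ := Finite.exists_max (G.dist rt)
  rcases hG.2 w with hwm | ⟨-, hwh⟩
  · obtain ⟨c, hc⟩ := Set.nonempty_of_ncard_ne_zero (hwm ▸ hm)
    have := hw c
    have := hc.2
    omega
  · exact hwh ▸ hw v

theorem ncard_eq (hG : IsCompleteMAryTree G rt m h) {v : V} (hv : G.dist rt v < h) :
    {c | IsChild G rt v c}.ncard = m :=
  (hG.2 v).resolve_right fun ⟨_, hvh⟩ => hv.ne hvh

theorem exists_child [Finite V] (hG : IsCompleteMAryTree G rt 2 h) :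
    ∃ child : V → Bool → V, ∀ v, G.dist rt v < h →
      (child v).Injective ∧ Set.range (child v) = {c | IsChild G rt v c} := by
  have (v : V) : ∃ f : Bool → V, G.dist rt v < h →
      f.Injective ∧ Set.range f = {c | IsChild G rt v c} := by
    by_cases hv : G.dist rt v < h
    · obtain ⟨e⟩ := Finite.card_eq.1 (by simpa using (hG.ncard_eq hv).symm :
        Nat.card Bool = Nat.card {c | IsChild G rt v c})
      exact ⟨Subtype.val ∘ e, fun _ => ⟨Subtype.val_injective.comp e.injective,
        by rw [Set.range_comp, e.range_eq_univ, Set.image_univ, Subtype.range_coe]⟩⟩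
    · exact ⟨fun _ => v, fun hv' => absurd hv' hv⟩
  exact Classical.skolem.1 this

end IsCompleteMAryTree

end RootedTree

namespace WordTree

def Adj (u v : List Bool) : Prop := (∃ c, v = u ++ [c]) ∨ ∃ c, u = v ++ [c]

instance : DecidableRel Adj := fun _ _ => by unfold Adj; infer_instance

theorem adj_append_left_iff (P : List Bool) {u v : List Bool} :
    Adj (P ++ u) (P ++ v) ↔ Adj u v := by
  simp [Adj]

abbrev Vert (h : ℕ) := {l : List Bool // l.length ≤ h}

def graph (h : ℕ) : SimpleGraph (Vert h) where
  Adj u v := Adj u.1 v.1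
  symm := ⟨fun _ _ => Or.symm⟩
  loopless := ⟨fun u huu => by
    rcases huu with ⟨c, hc⟩ | ⟨c, hc⟩ <;> simpa using congrArg List.length hc⟩

-- With `8` the code of a word `R`, the band of three levels below `R` is ordered as
-- `R00, R000…, R001…, R01, R010…, R011…, R0, R, R10, R100…, R101…, R11, R110…, R111…, R1`,
-- where `Rxyz…` is the whole subtree below `Rxyz`, whose keys start with the code of `xyz`.
def blockKey : Bool × Bool × Bool → ℕ
  | (a, b, c) => (if a then 8 else 0) + (if b then 4 else 1) + (if c then 2 else 1)

def tailKey : List Bool → ℕ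
  | [] => 8
  | [a] => if a then 15 else 7
  | a :: b :: _ => (if a then 8 else 0) + (if b then 4 else 1)

def key : List Bool → List ℕ
  | a :: b :: c :: t => blockKey (a, b, c) :: key t
  | l => [tailKey l]

def unblock (K : List (Bool × Bool × Bool)) : List Bool := K.flatMap fun q => [q.1, q.2.1, q.2.2]

theorem length_unblock_append (K : List (Bool × Bool × Bool)) (ρ : List Bool) :
    (unblock K ++ ρ).length = 3 * K.length + ρ.length := by
  simp [unblock, mul_comm]

theorem key_unblock_append (K : List (Bool × Bool × Bool)) (ρ : List Bool) :
    key (unblock K ++ ρ) = K.map blockKey ++ key ρ := by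
  induction K with
  | nil => rfl
  | cons q K ih => simpa [unblock, key] using ih

theorem exists_unblock_append : ∀ l : List Bool, ∃ K ρ, l = unblock K ++ ρ ∧ ρ.length ≤ 2
  | [] => ⟨[], [], rfl, by simp⟩
  | [a] => ⟨[], [a], rfl, by simp⟩
  | [a, b] => ⟨[], [a, b], rfl, by simp⟩
  | a :: b :: c :: t =>
    let ⟨K, ρ, hl, hρ⟩ := exists_unblock_append t
    ⟨(a, b, c) :: K, ρ, by simp [hl, unblock], hρ⟩

theorem key_of_length_le_two {ρ : List Bool} (hρ : ρ.length ≤ 2) : key ρ = [tailKey ρ] := by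
  match ρ, hρ with
  | [], _ | [_], _ | [_, _], _ => rfl

theorem blockKey_injective : Function.Injective blockKey := by decide

theorem exists_eq_unblock_append_of_key_between {K : List (Bool × Bool × Bool)} {s₁ s₂ : List ℕ}
    {v : List Bool} (h₁ : K.map blockKey ++ s₁ < key v) (h₂ : key v < K.map blockKey ++ s₂) :
    ∃ τ, v = unblock K ++ τ := by
  induction K generalizing v with
  | nil => exact ⟨v, rfl⟩
  | cons q K ih =>
    match v, h₁, h₂ with
    | a :: b :: c :: t, h₁, h₂ =>
      obtain ⟨hq, h₁, h₂⟩ := List.eq_and_lt_of_cons_lt_of_lt_cons h₁ h₂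
      obtain ⟨τ, rfl⟩ := ih h₁ h₂
      exact ⟨τ, by simp [← blockKey_injective hq, unblock]⟩
    | [], h₁, h₂ | [_], h₁, h₂ | [_, _], h₁, h₂ =>
      exact absurd (List.eq_and_lt_of_cons_lt_of_lt_cons h₁ h₂).2.1 (List.not_lt_nil _)

def shortWords : ℕ → List (List Bool)
  | 0 => [[]]
  | n + 1 => [] :: (shortWords n).flatMap fun l => [false :: l, true :: l]

theorem mem_shortWords {n : ℕ} {l : List Bool} (hl : l.length ≤ n) : l ∈ shortWords n := by
  induction l generalizing n with
  | nil => cases n <;> simp [shortWords]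
  | cons a l ih =>
    cases n with
    | zero => simp at hl
    | succ n => cases a <;> simpa [shortWords] using ih (Nat.le_of_succ_le_succ hl)

theorem tailKey_injOn :
    ∀ ρ ∈ shortWords 2, ∀ ρ' ∈ shortWords 2, tailKey ρ = tailKey ρ' → ρ = ρ' := by
  decide

theorem key_injective : Function.Injective key := by
  intro u v huv
  obtain ⟨K, ρ, rfl, hρ⟩ := exists_unblock_append u
  obtain ⟨K', ρ', rfl, hρ'⟩ := exists_unblock_append v
  rw [key_unblock_append, key_unblock_append, key_of_length_le_two hρ,
    key_of_length_le_two hρ'] at huv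
  obtain ⟨hK, hρρ'⟩ := List.append_inj huv (by simpa using congrArg List.length huv)
  rw [(List.map_injective_iff.2 blockKey_injective) hK,
    tailKey_injOn ρ (mem_shortWords hρ) ρ' (mem_shortWords hρ') (List.singleton_inj.1 hρρ')]

theorem adj_of_key_between_short : ∀ ρu ∈ shortWords 3, ∀ ρw ∈ shortWords 3, ∀ τ ∈ shortWords 5,
    Adj ρu ρw → key ρu < key τ → key τ < key ρw → ρu.length / 3 = τ.length / 3 → Adj τ ρw := by
  decide

theorem exists_unblock_append_of_adj {u w : List Bool} (huw : Adj u w) :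
    ∃ K ρu ρw, u = unblock K ++ ρu ∧ w = unblock K ++ ρw ∧ ρu.length ≤ 3 ∧ ρw.length ≤ 3 ∧
      Adj ρu ρw := by
  rcases huw with ⟨c, rfl⟩ | ⟨c, rfl⟩
  · obtain ⟨K, ρ, rfl, hρ⟩ := exists_unblock_append u
    exact ⟨K, ρ, ρ ++ [c], rfl, by simp, by omega, by simp; omega, Or.inl ⟨c, rfl⟩⟩
  · obtain ⟨K, ρ, rfl, hρ⟩ := exists_unblock_append w
    exact ⟨K, ρ ++ [c], ρ, by simp, rfl, by simp; omega, by omega, Or.inr ⟨c, rfl⟩⟩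

theorem adj_of_key_between {u v w : List Bool} (huv : key u < key v) (hvw : key v < key w)
    (hlen : u.length / 3 = v.length / 3) (huw : Adj u w) : Adj v w := by
  obtain ⟨K, ρu, ρw, rfl, rfl, hρu, hρw, hadj⟩ := exists_unblock_append_of_adj huw
  rw [key_unblock_append] at huv hvw
  obtain ⟨τ, rfl⟩ := exists_eq_unblock_append_of_key_between huv hvw
  rw [key_unblock_append, List.append_lt_append_left_iff] at huv hvw
  rw [length_unblock_append, length_unblock_append] at hlen
  rw [adj_append_left_iff]
  exact adj_of_key_between_short ρu (mem_shortWords hρu) ρw (mem_shortWords hρw) τ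
    (mem_shortWords (by omega)) hadj huv hvw (by omega)

theorem isKThin_graph (h : ℕ) : IsKThin (graph h) (h / 3 + 1) :=
  ⟨Function.onFun (· < ·) fun v : Vert h => key v.1,
    Function.Injective.isStrictTotalOrder_onFun _ (key_injective.comp Subtype.val_injective),
    fun v => ⟨v.1.length / 3, by have := v.2; omega⟩,
    fun _ _ _ huv hvw hC huw => adj_of_key_between huv hvw (Fin.val_eq_of_eq hC) huw⟩

variable {h : ℕ}

def subtree (h : ℕ) (p : List Bool) : Set (Vert h) := {v | p <+: v.1}

theorem subtree_mono {p q : List Bool} (hpq : p <+: q) : subtree h q ⊆ subtree h p :=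
  fun _ hv => hpq.trans hv

theorem exists_eq_append_of_adj_of_mem_subtree {q : List Bool} {z x : Vert h}
    (hzx : (graph h).Adj z x) (hx : x ∈ subtree h q) (hz : z ∉ subtree h q) :
    ∃ c, q = z.1 ++ [c] := by
  rcases hzx with ⟨c, hc⟩ | ⟨c, hc⟩
  · have hx' : q <+: z.1 ++ [c] := hc ▸ hx
    exact ⟨c, (List.prefix_concat_iff.1 hx').resolve_right hz⟩
  · exact absurd (hx.trans (hc ▸ List.prefix_append _ _)) hz

theorem not_adj_of_not_mem_subtree {q : List Bool} {z x : Vert h} (hz : z ∉ subtree h q) (b : Bool)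
    (hx : x ∈ subtree h (q ++ [b])) : ¬ (graph h).Adj z x := fun hzx =>
  let ⟨_, hc⟩ := exists_eq_append_of_adj_of_mem_subtree hzx hx
    fun hz' => hz (subtree_mono (List.prefix_append q [b]) hz')
  hz (List.append_inj_left' hc rfl ▸ List.prefix_rfl)

theorem preconnected_induce_subtree_diff {p q : List Bool} (hp : p.length ≤ h) (hqp : ¬ q <+: p) :
    ((graph h).induce (subtree h p \ subtree h q)).Preconnected := by
  set Z := subtree h p \ subtree h q
  have hpZ : (⟨p, hp⟩ : Vert h) ∈ Z := ⟨List.prefix_rfl, hqp⟩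
  suffices hreach : ∀ t (v : Vert h) (hv : v ∈ Z), v.1 = p ++ t →
      ((graph h).induce Z).Reachable ⟨⟨p, hp⟩, hpZ⟩ ⟨v, hv⟩ by
    intro u v
    obtain ⟨t, ht⟩ := u.2.1
    obtain ⟨t', ht'⟩ := v.2.1
    exact (hreach t u u.2 ht.symm).symm.trans (hreach t' v v.2 ht'.symm)
  intro t
  induction t using List.reverseRecOn with
  | nil =>
    intro v hv hvp
    obtain rfl : v = ⟨p, hp⟩ := Subtype.ext (by simpa using hvp)
    rfl
  | append_singleton t c ih =>
    intro v hv hvp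
    have hlen : (p ++ t).length ≤ h := by
      have := v.2
      rw [hvp] at this
      simp at this ⊢
      omega
    have hu : (⟨p ++ t, hlen⟩ : Vert h) ∈ Z :=
      ⟨List.prefix_append _ _, fun hq => hv.2 (hq.trans ⟨[c], by simp [hvp]⟩)⟩
    exact (ih _ hu rfl).trans (SimpleGraph.Adj.reachable (Or.inl ⟨c, by simp [hvp]⟩))

variable (r : Vert h → Vert h → Prop) [IsStrictTotalOrder (Vert h) r]

theorem exists_card_succ_or_of_branch {p s : List Bool} (hp : p.length ≤ h) (hs : s ≠ [])
    (b : Bool) {S : Finset (Vert h)} {e : Vert h}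
    (hS : IsConflictChain (graph h) r (subtree h (p ++ s ++ [b])) S e) :
    (∃ S', IsConflictChain (graph h) r (subtree h p) S' e ∧ S'.card = S.card + 1) ∨
      (∀ z ∈ subtree h p \ subtree h (p ++ s), r z e) ∨
      ∀ z ∈ subtree h p \ subtree h (p ++ s), r e z := by
  refine hS.exists_card_succ_or (subtree_mono (by simp)) Set.sdiff_subset ?_
    (fun z hz y hy => not_adj_of_not_mem_subtree hz.2 b hy)
    (preconnected_induce_subtree_diff hp fun hsp => hs ?_)
  · exact Set.disjoint_left.2 fun z hz hzD => hz.2 (subtree_mono (List.prefix_append _ _) hzD)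
  · simpa using hsp.length_le

theorem exists_conflictChain (j : ℕ) :
    ∀ p : List Bool, p.length + 3 * j ≤ h →
      ∃ S e, IsConflictChain (graph h) r (subtree h p) S e ∧ S.card = j + 1 := by
  induction j with
  | zero =>
    intro p hp
    refine ⟨{⟨p, by omega⟩}, ⟨p, by omega⟩, ⟨Finset.mem_singleton_self _, by simp [subtree],
      by simp, ?_⟩, rfl⟩
    simp only [Finset.mem_singleton]
    rintro a rfl b rfl hab
    exact absurd hab (irrefl _)
  | succ j ih =>
    intro p hp
    let s : Fin 3 → List Bool := ![[false, false], [false, true], [true, false]]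
    have hs : ∀ i, (s i).length = 2 := by decide
    have hsep : ∀ i j, i ≠ j → ¬ s i <+: s j ++ [false] := by decide
    choose S e hS hcard using fun i => ih (p ++ s i ++ [false]) (by simp [hs]; omega)
    by_contra hnot
    refine false_of_forall_side (by simp) (Z := fun i => subtree h p \ subtree h (p ++ s i))
      (e := e) (r := r) ?_ fun i => ?_
    · intro i k hik
      have hek := (hS k).2.1 (hS k).1
      refine ⟨subtree_mono (by simp) hek, fun hei => hsep i k hik ?_⟩
      simpa using List.prefix_of_prefix_length_le hei hek (by simp [hs])
    · have hsi : s i ≠ [] := List.ne_nil_of_length_pos (by simp [hs])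
      refine (exists_card_succ_or_of_branch r (by omega) hsi false (hS i)).resolve_left ?_
      rintro ⟨S', hS', hcard'⟩
      exact hnot ⟨S', e i, hS', by rw [hcard', hcard i]⟩

theorem le_of_isKThin_graph {k : ℕ} (hk : IsKThin (graph h) k) : h / 3 + 1 ≤ k := by
  obtain ⟨r, hr, C, hC⟩ := hk
  obtain ⟨S, e, hS, hcard⟩ := exists_conflictChain r (h / 3) [] (by simp; omega)
  exact hcard ▸ hS.card_le hC

theorem thinness_graph (h : ℕ) : Thinness (graph h) = h / 3 + 1 :=
  IsLeast.csInf_eq ⟨isKThin_graph h, fun _ => le_of_isKThin_graph⟩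

end WordTree

section Descend

variable {G : SimpleGraph V} {rt : V} {h : ℕ} {child : V → Bool → V}
  (hchild : ∀ v, G.dist rt v < h →
    (child v).Injective ∧ Set.range (child v) = {c | IsChild G rt v c})
include hchild

theorem isChild_child {v : V} (hv : G.dist rt v < h) (c : Bool) : IsChild G rt v (child v c) :=
  (hchild v hv).2.subset (Set.mem_range_self c)

theorem dist_foldl_child {t : List Bool} (ht : t.length ≤ h) :
    G.dist rt (t.foldl child rt) = t.length := by
  induction t using List.reverseRecOn with
  | nil => exact dist_self
  | append_singleton t c ih =>
    simp only [List.length_append, List.length_singleton] at ht ⊢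
    have hdist := ih (by omega)
    rw [List.foldl_concat, ← (isChild_child hchild (by omega) c).2, hdist]

theorem isChild_foldl_child {t : List Bool} (ht : t.length < h) (c : Bool) :
    IsChild G rt (t.foldl child rt) ((t ++ [c]).foldl child rt) := by
  rw [List.foldl_concat]
  exact isChild_child hchild (by rw [dist_foldl_child hchild ht.le]; exact ht) c

theorem exists_eq_append_isChild_foldl_child {b : List Bool} (hb : b.length ≤ h) (hb0 : b ≠ []) :
    ∃ b' c, b = b' ++ [c] ∧ IsChild G rt (b'.foldl child rt) (b.foldl child rt) := by
  obtain ⟨b', c, rfl⟩ := (List.eq_nil_or_concat' b).resolve_left hb0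
  exact ⟨b', c, rfl, isChild_foldl_child hchild (by simp at hb; omega) c⟩

theorem foldl_child_injOn (hT : G.IsTree) {a b : List Bool} (ha : a.length ≤ h)
    (hb : b.length ≤ h) (hab : a.foldl child rt = b.foldl child rt) : a = b := by
  induction a using List.reverseRecOn generalizing b with
  | nil =>
    have hb0 := dist_foldl_child hchild hb
    rw [← hab, List.foldl_nil, dist_self] at hb0
    exact (List.length_eq_zero_iff.1 hb0.symm).symm
  | append_singleton a c ih =>
    have hlen : b.length = a.length + 1 := by
      rw [← dist_foldl_child hchild hb, ← hab, dist_foldl_child hchild ha, List.length_append,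
        List.length_singleton]
    obtain ⟨b, c', rfl, hparent⟩ :=
      exists_eq_append_isChild_foldl_child hchild hb (List.ne_nil_of_length_pos (by omega))
    simp only [List.length_append, List.length_singleton] at ha hb
    obtain rfl := ih (by omega) (by omega)
      (hT.isChild_unique_s11 (isChild_foldl_child hchild (t := a) (by omega) c) (hab ▸ hparent))
    rw [List.foldl_concat, List.foldl_concat] at hab
    rw [(hchild _ (by rw [dist_foldl_child hchild (by omega)]; omega)).1 hab]

theorem isChild_foldl_child_iff (hT : G.IsTree) {a b : List Bool} (ha : a.length ≤ h)
    (hb : b.length ≤ h) :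
    IsChild G rt (a.foldl child rt) (b.foldl child rt) ↔ ∃ c, b = a ++ [c] := by
  refine ⟨fun hab => ?_, ?_⟩
  · have hlen : b.length = a.length + 1 := by
      rw [← dist_foldl_child hchild hb, ← hab.2, dist_foldl_child hchild ha]
    obtain ⟨b, c, rfl, hparent⟩ :=
      exists_eq_append_isChild_foldl_child hchild hb (List.ne_nil_of_length_pos (by omega))
    simp only [List.length_append, List.length_singleton] at hb
    exact ⟨c, by rw [foldl_child_injOn hchild hT ha (by omega) (hT.isChild_unique_s11 hab hparent)]⟩
  · rintro ⟨c, rfl⟩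
    exact isChild_foldl_child hchild (by simp at hb; omega) c

theorem exists_foldl_child_eq (hT : G.IsTree) (hle : ∀ v, G.dist rt v ≤ h) (v : V) :
    ∃ t : List Bool, t.length = G.dist rt v ∧ t.foldl child rt = v := by
  induction hn : G.dist rt v generalizing v with
  | zero => exact ⟨[], rfl, (hT.connected.dist_eq_zero_iff.1 hn)⟩
  | succ n ih =>
    obtain ⟨u, hu⟩ := hT.exists_isChild (rt := rt) (v := v) (by rintro rfl; simp at hn)
    obtain ⟨t, ht, rfl⟩ := ih u (by have := hu.2; omega)
    obtain ⟨c, rfl⟩ := (hchild _ (by have := hu.2; have := hle v; omega)).2.symm.subset hu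
    exact ⟨t ++ [c], by simp [ht], List.foldl_concat ..⟩

end Descend

theorem IsCompleteMAryTree.nonempty_wordTree_iso [Finite V] {G : SimpleGraph V} {rt : V} {h : ℕ}
    (hG : IsCompleteMAryTree G rt 2 h) : Nonempty (WordTree.graph h ≃g G) := by
  obtain ⟨child, hchild⟩ := hG.exists_child
  have hle := hG.dist_le two_ne_zero
  let f : WordTree.Vert h → V := fun t => t.1.foldl child rt
  have hinj : f.Injective := fun a b hab => Subtype.ext (foldl_child_injOn hchild hG.1 a.2 b.2 hab)
  have hsurj : f.Surjective := fun v =>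
    let ⟨t, ht, hv⟩ := exists_foldl_child_eq hchild hG.1 hle v
    ⟨⟨t, ht ▸ hle v⟩, hv⟩
  refine ⟨⟨Equiv.ofBijective f ⟨hinj, hsurj⟩, fun {a b} => ?_⟩⟩
  change G.Adj (f a) (f b) ↔ _
  rw [hG.1.adj_iff_isChild_or_isChild rt,
    isChild_foldl_child_iff hchild hG.1 a.2 b.2, isChild_foldl_child_iff hchild hG.1 b.2 a.2]
  exact Iff.rfl

theorem thinness_complete_binary [Fintype V] (G : SimpleGraph V) (rt : V) (h : ℕ)
    (hG : IsCompleteMAryTree G rt 2 h) :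
    Thinness G = (h + 3) / 3 := by
  obtain ⟨e⟩ := hG.nonempty_wordTree_iso
  rw [← e.thinness_eq, WordTree.thinness_graph]
  omega
end

section
/- For any tree T with diameter d, thin(T) ≤ ⌈(d+1)/4⌉. -/
/-!
Hang the tree from a diameter path `p₀ p₁ … p_d`: each vertex `v` hangs from some `p_i` at
depth `k`, and its distances `i + k` to `p₀` and `d - i + k` to `p_d` are at most `d`, so
`2k ≤ d`.
Order the vertices by the index `i`, and within the tree hanging from `p_i` put every odd-depth
vertex before and every even-depth vertex (`p_i` included) after its subtree, so that subtrees
are intervals. Let the depths `2j` and `2j + 1` form the `j`-th class. If `u ≺ v ≺ w`, `u` and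
`v` share a class and `uw` is an edge, the interval structure forces `v` to be a child of `w`;
this uses `⌊d / 4⌋ + 1` classes.
-/

open SimpleGraph

variable {V : Type*}

namespace List

lemma prefix_of_append_lt_of_lt_append {α : Type*} [LinearOrder α] {P s t X : List α}
    (h₁ : P ++ s < X) (h₂ : X < P ++ t) : P <+: X := by
  induction P generalizing X with
  | nil => exact nil_prefix
  | cons a P ih =>
    cases X with
    | nil => exact absurd h₁ (not_lt_nil _)
    | cons b X =>
      rw [cons_append, cons_lt_cons_iff] at h₁ h₂
      rcases h₁ with hab | ⟨rfl, h₁⟩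
      · rcases h₂ with hba | ⟨rfl, -⟩
        · exact absurd hab hba.asymm
        · exact absurd hab (lt_irrefl _)
      · rcases h₂ with haa | ⟨-, h₂⟩
        · exact absurd haa (lt_irrefl _)
        · exact cons_prefix_cons.mpr ⟨rfl, ih h₁ h₂⟩

end List

namespace SimpleGraph

variable {G : SimpleGraph V}

lemma Walk.le_add_length_of_adj_le {f : V → ℕ} (hf : ∀ x y, G.Adj x y → f x ≤ f y + 1)
    {u v : V} (p : G.Walk u v) : f u ≤ f v + p.length := by
  induction p with
  | nil => simp
  | cons h _ ih => have := hf _ _ h; rw [Walk.length_cons]; omega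

lemma Connected.le_add_dist_of_adj_le (hG : G.Connected) {f : V → ℕ}
    (hf : ∀ x y, G.Adj x y → f x ≤ f y + 1) (u v : V) : f u ≤ f v + G.dist u v := by
  obtain ⟨p, hp⟩ := hG.exists_walk_length_eq_dist u v
  exact hp ▸ p.le_add_length_of_adj_le hf

lemma Walk.dist_getVert_of_length_eq_dist {r t : V} (p : G.Walk r t)
    (hp : p.length = G.dist r t) {j : ℕ} (hj : j ≤ p.length) : G.dist r (p.getVert j) = j := by
  rw [← length_eq_dist_of_subwalk hp (p.isSubwalk_take j), Walk.take_length]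
  omega

lemma exists_adj_dist_add_one_eq {r v : V} (h : G.dist r v ≠ 0) :
    ∃ x, G.Adj x v ∧ G.dist r x + 1 = G.dist r v := by
  obtain ⟨p, hp⟩ := (Reachable.of_dist_ne_zero h).exists_walk_length_eq_dist
  have hnil : ¬p.Nil := fun hn => h (hp ▸ hn.length_eq_zero)
  refine ⟨p.penultimate, p.adj_penultimate hnil, ?_⟩
  have hle : G.dist r p.penultimate ≤ p.dropLast.length := dist_le _
  have hge := (p.adj_penultimate hnil).diff_dist_adj (u := r)
  rw [Walk.length_dropLast] at hle
  omega

lemma IsAcyclic.eq_of_adj_of_dist_add_one_eq (hG : G.IsAcyclic) {r v x y : V}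
    (hx : G.Adj x v) (hy : G.Adj y v) (hdx : G.dist r x + 1 = G.dist r v)
    (hdy : G.dist r y + 1 = G.dist r v) : x = y := by
  have hrv : G.Reachable r v := Reachable.of_dist_ne_zero (by omega)
  obtain ⟨px, hpx⟩ := (hrv.trans hx.symm.reachable).exists_walk_length_eq_dist
  obtain ⟨py, hpy⟩ := (hrv.trans hy.symm.reachable).exists_walk_length_eq_dist
  have hx' : (px.concat hx).IsPath :=
    (px.concat hx).isPath_of_length_eq_dist (by rw [Walk.length_concat, hpx, hdx])
  have hy' : (py.concat hy).IsPath :=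
    (py.concat hy).isPath_of_length_eq_dist (by rw [Walk.length_concat, hpy, hdy])
  have heq := (hG.subsingleton_path r v).elim ⟨_, hx'⟩ ⟨_, hy'⟩
  simpa using congrArg (Walk.penultimate ∘ Subtype.val) heq

open Classical in
noncomputable def parentToward (G : SimpleGraph V) (r v : V) : V :=
  if h : ∃ x, G.Adj x v ∧ G.dist r x + 1 = G.dist r v then h.choose else v

lemma parentToward_spec {r v : V} (h : G.dist r v ≠ 0) :
    G.Adj (G.parentToward r v) v ∧ G.dist r (G.parentToward r v) + 1 = G.dist r v := by
  have hex := exists_adj_dist_add_one_eq h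
  rw [parentToward, dif_pos hex]
  exact hex.choose_spec

lemma IsAcyclic.parentToward_eq (hG : G.IsAcyclic) {r v x : V} (hx : G.Adj x v)
    (hdx : G.dist r x + 1 = G.dist r v) : G.parentToward r v = x :=
  have hspec := parentToward_spec (G := G) (r := r) (v := v) (by omega)
  hG.eq_of_adj_of_dist_add_one_eq hspec.1 hx hspec.2 hdx

end SimpleGraph

/-- `G` is the graph of the parent map `par` of a tree rooted at `spine 0` with levels `dep`,
and `spine 0, …, spine len` is a path descending from the root. -/
structure SpineRooting (G : SimpleGraph V) where
  par : V → V
  dep : V → ℕ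
  spine : ℕ → V
  len : ℕ
  dep_par {v : V} : dep v ≠ 0 → dep (par v) + 1 = dep v
  eq_spine_zero {v : V} : dep v = 0 → v = spine 0
  dep_spine {j : ℕ} : j ≤ len → dep (spine j) = j
  par_spine {j : ℕ} : j ≤ len → j ≠ 0 → par (spine j) = spine (j - 1)
  adj_iff {u w : V} : G.Adj u w ↔ (dep u ≠ 0 ∧ par u = w) ∨ (dep w ≠ 0 ∧ par w = u)

namespace SpineRooting

variable {G : SimpleGraph V} (T : SpineRooting G)

def OnSpine (v : V) : Prop := T.dep v ≤ T.len ∧ T.spine (T.dep v) = v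

lemma onSpine_spine {j : ℕ} (hj : j ≤ T.len) : T.OnSpine (T.spine j) := by
  simp [OnSpine, T.dep_spine hj, hj]

lemma dep_ne_zero_of_not_onSpine {v : V} (h : ¬T.OnSpine v) : T.dep v ≠ 0 := fun h0 =>
  h (T.eq_spine_zero h0 ▸ T.onSpine_spine (Nat.zero_le _))

lemma adj_par {v : V} (h : T.dep v ≠ 0) : G.Adj v (T.par v) :=
  T.adj_iff.mpr (.inl ⟨h, rfl⟩)

lemma le_add_dist_of_par (hG : G.Connected) {f : V → ℕ}
    (hf : ∀ x, T.dep x ≠ 0 → f x ≤ f (T.par x) + 1 ∧ f (T.par x) ≤ f x + 1) (u v : V) :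
    f u ≤ f v + G.dist u v := by
  refine hG.le_add_dist_of_adj_le (fun x y hxy => ?_) u v
  rcases T.adj_iff.mp hxy with ⟨hx, rfl⟩ | ⟨hy, rfl⟩
  · exact (hf x hx).1
  · exact (hf y hy).2

lemma dep_le_dist (hG : G.Connected) (v : V) : T.dep v ≤ G.dist v (T.spine 0) := by
  have := T.le_add_dist_of_par hG (f := T.dep)
    (fun x hx => by have := T.dep_par hx; omega) v (T.spine 0)
  rwa [T.dep_spine (Nat.zero_le _), zero_add] at this

open Classical in
/-- The vertices strictly below the spine on the way from the spine down to `v`. -/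
noncomputable def branch (v : V) : List V :=
  if T.OnSpine v then [] else branch (T.par v) ++ [v]
termination_by T.dep v
decreasing_by have := T.dep_par (T.dep_ne_zero_of_not_onSpine ‹_›); omega

open Classical in
noncomputable def foot (v : V) : ℕ :=
  if T.OnSpine v then T.dep v else foot (T.par v)
termination_by T.dep v
decreasing_by have := T.dep_par (T.dep_ne_zero_of_not_onSpine ‹_›); omega

noncomputable def depth (v : V) : ℕ := (T.branch v).length

theorem induction_on {motive : V → Prop} (onSpine : ∀ v, T.OnSpine v → motive v)
    (step : ∀ v, ¬T.OnSpine v → motive (T.par v) → motive v) (v : V) : motive v := by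
  induction h : T.dep v using Nat.strong_induction_on generalizing v with
  | _ n ih =>
    by_cases hv : T.OnSpine v
    · exact onSpine v hv
    · have := T.dep_par (T.dep_ne_zero_of_not_onSpine hv)
      exact step v hv (ih _ (by omega) _ rfl)

section Branch

variable {v : V}

lemma branch_of_onSpine (h : T.OnSpine v) : T.branch v = [] := by
  rw [branch, if_pos h]

lemma branch_of_not_onSpine (h : ¬T.OnSpine v) : T.branch v = T.branch (T.par v) ++ [v] := by
  rw [branch, if_neg h]

lemma foot_of_onSpine (h : T.OnSpine v) : T.foot v = T.dep v := by
  rw [foot, if_pos h]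

lemma foot_of_not_onSpine (h : ¬T.OnSpine v) : T.foot v = T.foot (T.par v) := by
  rw [foot, if_neg h]

lemma depth_of_onSpine (h : T.OnSpine v) : T.depth v = 0 := by
  simp [depth, T.branch_of_onSpine h]

lemma depth_of_not_onSpine (h : ¬T.OnSpine v) : T.depth v = T.depth (T.par v) + 1 := by
  simp [depth, T.branch_of_not_onSpine h]

lemma onSpine_of_depth_eq_zero (h : T.depth v = 0) : T.OnSpine v := by
  by_contra hv
  simp [T.depth_of_not_onSpine hv] at h

variable {T}

lemma OnSpine.par (h : T.OnSpine v) (h0 : T.dep v ≠ 0) : T.OnSpine (T.par v) := by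
  have hpar : T.par v = T.spine (T.dep v - 1) := by
    conv_lhs => rw [← h.2]
    exact T.par_spine h.1 h0
  exact hpar ▸ T.onSpine_spine (by have := h.1; omega)

lemma OnSpine.foot_par (h : T.OnSpine v) (h0 : T.dep v ≠ 0) :
    T.foot (T.par v) + 1 = T.foot v := by
  rw [T.foot_of_onSpine (h.par h0), T.foot_of_onSpine h, T.dep_par h0]

variable (T)

lemma foot_le_len (v : V) : T.foot v ≤ T.len := by
  induction v using T.induction_on with
  | onSpine v h => rw [T.foot_of_onSpine h]; exact h.1
  | step v h ih => rwa [T.foot_of_not_onSpine h]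

lemma dep_eq_foot_add_depth (v : V) : T.dep v = T.foot v + T.depth v := by
  induction v using T.induction_on with
  | onSpine v h => rw [T.foot_of_onSpine h, T.depth_of_onSpine h, add_zero]
  | step v h ih =>
    have := T.dep_par (T.dep_ne_zero_of_not_onSpine h)
    rw [T.foot_of_not_onSpine h, T.depth_of_not_onSpine h]
    omega

lemma eq_of_foot_eq_of_branch_eq {x y : V} (hf : T.foot x = T.foot y)
    (hb : T.branch x = T.branch y) : x = y := by
  by_cases hx : T.OnSpine x
  · have hy : T.OnSpine y := T.onSpine_of_depth_eq_zero <| by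
      rw [depth, ← hb, T.branch_of_onSpine hx]; rfl
    rw [T.foot_of_onSpine hx, T.foot_of_onSpine hy] at hf
    rw [← hx.2, ← hy.2, hf]
  · have hy : ¬T.OnSpine y := fun hy => by
      simp [T.branch_of_not_onSpine hx, T.branch_of_onSpine hy] at hb
    rw [T.branch_of_not_onSpine hx, T.branch_of_not_onSpine hy] at hb
    exact (List.append_inj' hb rfl).2 |> List.singleton_injective

end Branch

lemma depth_add_sub_foot_le_dist (hG : G.Connected) (v : V) :
    T.depth v + (T.len - T.foot v) ≤ G.dist v (T.spine T.len) := by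
  have hs := T.onSpine_spine le_rfl
  have := T.le_add_dist_of_par hG (f := fun x => T.depth x + (T.len - T.foot x))
    (fun x hx => ?_) v (T.spine T.len)
  · rw [T.depth_of_onSpine hs, T.foot_of_onSpine hs, T.dep_spine le_rfl] at this
    omega
  by_cases hxs : T.OnSpine x
  · have := hxs.foot_par hx
    have := T.foot_le_len x
    rw [T.depth_of_onSpine hxs, T.depth_of_onSpine (hxs.par hx)]
    omega
  · rw [T.depth_of_not_onSpine hxs, T.foot_of_not_onSpine hxs]
    omega

lemma two_mul_depth_le (hG : G.Connected) (hdiam : ∀ x y, G.dist x y ≤ T.len) (v : V) :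
    2 * T.depth v ≤ T.len := by
  have := T.dep_le_dist hG v
  have := T.depth_add_sub_foot_le_dist hG v
  have := T.dep_eq_foot_add_depth v
  have := T.foot_le_len v
  have := hdiam v (T.spine 0)
  have := hdiam v (T.spine T.len)
  omega

def IsBelow (a x : V) : Prop := T.foot x = T.foot a ∧ T.branch a <+: T.branch x

lemma isBelow_par {x : V} (h : ¬T.OnSpine x) : T.IsBelow (T.par x) x :=
  ⟨T.foot_of_not_onSpine h, T.branch_of_not_onSpine h ▸ List.prefix_append _ _⟩

lemma isBelow_of_onSpine {a x : V} (ha : T.OnSpine a) (hf : T.foot x = T.foot a) :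
    T.IsBelow a x :=
  ⟨hf, T.branch_of_onSpine ha ▸ List.nil_prefix⟩

/-- The final `⊤` puts an even-depth vertex after its proper descendants in the lexicographic
order, while an odd-depth vertex, a proper prefix of theirs, comes before them. -/
noncomputable def key (v : V) : ℕ ×ₗ List (WithTop V) :=
  toLex (T.foot v, (T.branch v).map (↑) ++ if Even (T.depth v) then [⊤] else [])

lemma key_injective : Function.Injective T.key := by
  intro x y h
  simp only [key, toLex_inj, Prod.mk.injEq] at h
  obtain ⟨hf, hl⟩ := h
  refine T.eq_of_foot_eq_of_branch_eq hf ?_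
  split_ifs at hl
  · exact List.map_injective_iff.mpr WithTop.coe_injective (List.append_cancel_right hl)
  · simpa using congrArg (⊤ ∈ ·) hl
  · simpa using congrArg (⊤ ∈ ·) hl
  · simpa [List.map_inj_right WithTop.coe_injective] using hl

namespace IsBelow

variable {T} {a x : V}

lemma depth_le (h : T.IsBelow a x) : T.depth a ≤ T.depth x := h.2.length_le

lemma eq_of_depth_le (h : T.IsBelow a x) (hd : T.depth x ≤ T.depth a) : x = a :=
  T.eq_of_foot_eq_of_branch_eq h.1 (h.2.eq_of_length (le_antisymm h.depth_le hd)).symm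

lemma par_eq (h : T.IsBelow a x) (hd : T.depth x = T.depth a + 1) : T.par x = a := by
  have hx : ¬T.OnSpine x := fun hx => by simp [T.depth_of_onSpine hx] at hd
  have hpar : T.IsBelow a (T.par x) := by
    refine ⟨(T.foot_of_not_onSpine hx).symm.trans h.1, ?_⟩
    have h2 := h.2
    rw [T.branch_of_not_onSpine hx, List.prefix_concat_iff] at h2
    refine h2.resolve_left fun heq => ?_
    have := congrArg List.length heq
    simp [depth, T.branch_of_not_onSpine hx] at hd this
    omega
  exact hpar.eq_of_depth_le (by rw [T.depth_of_not_onSpine hx] at hd; omega)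

lemma adj_of_depth_eq (h : T.IsBelow a x) (hd : T.depth x = T.depth a + 1) : G.Adj x a := by
  have hx : T.dep x ≠ 0 := T.dep_ne_zero_of_not_onSpine fun hx => by
    simp [T.depth_of_onSpine hx] at hd
  exact h.par_eq hd ▸ T.adj_par hx

lemma exists_key_eq (h : T.IsBelow a x) (hne : x ≠ a) :
    ∃ (b : V) (r : List (WithTop V)),
      T.key x = toLex (T.foot a, (T.branch a).map (↑) ++ ((b : WithTop V) :: r)) := by
  obtain ⟨r, hr⟩ := h.2
  cases r with
  | nil => exact absurd (h.eq_of_depth_le (by simp [depth, ← hr])) hne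
  | cons b r =>
    refine ⟨b, r.map (↑) ++ if Even (T.depth x) then [⊤] else [], ?_⟩
    rw [key, h.1, ← hr]; simp

end IsBelow

section Order

variable [LinearOrder V]

lemma foot_le_of_key_lt {x y : V} (h : T.key x < T.key y) : T.foot x ≤ T.foot y := by
  rcases Prod.Lex.toLex_lt_toLex.mp h with h | ⟨h, -⟩
  · exact h.le
  · exact h.le

lemma key_lt_of_foot_lt {x y : V} (h : T.foot x < T.foot y) : T.key x < T.key y :=
  Prod.Lex.toLex_lt_toLex.mpr (.inl h)

lemma isBelow_of_between {a y : V} {s t : List (WithTop V)}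
    (h₁ : toLex (T.foot a, (T.branch a).map (↑) ++ s) < T.key y)
    (h₂ : T.key y < toLex (T.foot a, (T.branch a).map (↑) ++ t)) : T.IsBelow a y := by
  rw [key, Prod.Lex.toLex_lt_toLex] at h₁ h₂
  have hf : T.foot y = T.foot a := by
    rcases h₁ with h₁ | h₁ <;> rcases h₂ with h₂ | h₂ <;> simp only at h₁ h₂ <;>
      omega
  refine ⟨hf, ?_⟩
  have hpre := List.prefix_of_append_lt_of_lt_append
    (h₁.resolve_left (by simp [hf])).2 (h₂.resolve_left (by simp [hf])).2
  split_ifs at hpre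
  · rcases List.prefix_concat_iff.mp hpre with heq | hpre
    · simpa using congrArg (⊤ ∈ ·) heq
    · exact (List.prefix_map_iff_of_injective WithTop.coe_injective).mp hpre
  · exact (List.prefix_map_iff_of_injective WithTop.coe_injective).mp (by simpa using hpre)

namespace IsBelow

variable {T} {a x : V}

lemma key_lt_of_even (h : T.IsBelow a x) (hne : x ≠ a) (he : Even (T.depth a)) :
    T.key x < T.key a := by
  obtain ⟨b, r, hx⟩ := h.exists_key_eq hne
  rw [hx, key, if_pos he, Prod.Lex.toLex_lt_toLex]
  exact .inr ⟨rfl, List.append_left_lt (by simp [List.cons_lt_cons_iff])⟩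

lemma key_lt_of_not_even (h : T.IsBelow a x) (hne : x ≠ a) (he : ¬Even (T.depth a)) :
    T.key a < T.key x := by
  obtain ⟨b, r, hx⟩ := h.exists_key_eq hne
  rw [hx, key, if_neg he, Prod.Lex.toLex_lt_toLex]
  refine .inr ⟨rfl, ?_⟩
  simpa using List.append_left_lt (List.nil_lt_cons _ r) (l₁ := (T.branch a).map (↑))

lemma of_key_between (h : T.IsBelow a x) {y : V}
    (hy : T.key a < T.key y ∧ T.key y < T.key x ∨ T.key x < T.key y ∧ T.key y < T.key a) :
    T.IsBelow a y := by
  obtain ⟨r, hr⟩ := h.2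
  have hx : T.key x = toLex (T.foot a, (T.branch a).map (↑) ++
      (r.map (↑) ++ if Even (T.depth x) then [⊤] else [])) := by
    rw [key, h.1, ← hr]; simp
  rcases hy with ⟨h₁, h₂⟩ | ⟨h₁, h₂⟩
  · exact T.isBelow_of_between h₁ (hx ▸ h₂)
  · exact T.isBelow_of_between (hx ▸ h₁) h₂

end IsBelow

theorem adj_of_key_lt_of_key_lt {u v w : V} (huv : T.key u < T.key v) (hvw : T.key v < T.key w)
    (hclass : T.depth u / 2 = T.depth v / 2) (huw : G.Adj u w) : G.Adj v w := by
  have huw' : T.key u < T.key w := huv.trans hvw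
  have hvw' : v ≠ w := ne_of_apply_ne T.key hvw.ne
  have hvu : v ≠ u := ne_of_apply_ne T.key huv.ne'
  rcases T.adj_iff.mp huw with ⟨hu0, rfl⟩ | ⟨hw0, rfl⟩
  · by_cases hu : T.OnSpine u
    · exact absurd huw' (T.key_lt_of_foot_lt (by have := hu.foot_par hu0; omega)).asymm
    · have hb := T.isBelow_par hu
      have he : Even (T.depth (T.par u)) := by
        by_contra he
        exact huw'.asymm (hb.key_lt_of_not_even (ne_of_apply_ne T.key huw'.ne) he)
      -- `v` lies in the interval of the subtree of the even-depth vertex `par u`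
      have hv := hb.of_key_between (.inr ⟨huv, hvw⟩)
      have hne : T.depth v ≠ T.depth (T.par u) := fun h => hvw' (hv.eq_of_depth_le h.le)
      have := T.depth_of_not_onSpine hu
      have := hv.depth_le
      rw [Nat.even_iff] at he
      exact hv.adj_of_depth_eq (by omega)
  · by_cases hw : T.OnSpine w
    · have hu := hw.par hw0
      have hfv : T.foot v = T.foot w := by
        have := hw.foot_par hw0
        have := T.foot_le_of_key_lt huv
        have := T.foot_le_of_key_lt hvw
        have : T.foot (T.par w) ≠ T.foot v := fun hf => huv.asymm
          ((T.isBelow_of_onSpine hu hf.symm).key_lt_of_even hvu (by simp [T.depth_of_onSpine hu]))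
        omega
      have hv := T.isBelow_of_onSpine hw hfv
      have hne : T.depth v ≠ 0 := fun h => hvw' (hv.eq_of_depth_le (by simp [h]))
      rw [T.depth_of_onSpine hu] at hclass
      exact hv.adj_of_depth_eq (by rw [T.depth_of_onSpine hw]; omega)
    · have hb := T.isBelow_par hw
      have ho : ¬Even (T.depth (T.par w)) := fun he =>
        huw'.asymm (hb.key_lt_of_even (ne_of_apply_ne T.key huw'.ne') he)
      -- `v` is a proper descendant of the odd-depth vertex `u`, hence in a later class
      have hv := hb.of_key_between (.inl ⟨huv, hvw⟩)
      have hne : T.depth v ≠ T.depth (T.par w) := fun h => hvu (hv.eq_of_depth_le h.le)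
      have := hv.depth_le
      rw [Nat.even_iff] at ho
      omega

end Order

theorem isKThin {m : ℕ} (hm : ∀ v, T.depth v ≤ m) : IsKThin G (m / 2 + 1) := by
  let : LinearOrder V := IsWellOrder.linearOrder WellOrderingRel
  refine ⟨Function.onFun (· < ·) T.key,
    T.key_injective.isStrictTotalOrder_onFun (r := (· < ·)),
    fun v => ⟨T.depth v / 2, by have := hm v; omega⟩, ?_⟩
  intro u v w huv hvw hclass huw
  exact T.adj_of_key_lt_of_key_lt huv hvw (Fin.val_eq_of_eq hclass) huw

end SpineRooting

noncomputable def SimpleGraph.IsTree.spineRooting {G : SimpleGraph V} (hG : G.IsTree) {r t : V}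
    (p : G.Walk r t) (hp : p.length = G.dist r t) : SpineRooting G where
  par := G.parentToward r
  dep := G.dist r
  spine := p.getVert
  len := p.length
  dep_par h := (parentToward_spec h).2
  eq_spine_zero h := by rw [Walk.getVert_zero]; exact (hG.connected.dist_eq_zero_iff.mp h).symm
  dep_spine hj := p.dist_getVert_of_length_eq_dist hp hj
  par_spine {j} hj hj0 := by
    have hadj := p.adj_getVert_succ (i := j - 1) (by omega)
    rw [Nat.sub_add_cancel (Nat.one_le_iff_ne_zero.mpr hj0)] at hadj
    refine hG.isAcyclic.parentToward_eq hadj ?_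
    rw [p.dist_getVert_of_length_eq_dist hp hj, p.dist_getVert_of_length_eq_dist hp (by omega)]
    omega
  adj_iff {u w} := by
    constructor
    · intro h
      rcases hG.dist_eq_dist_add_one_of_adj r h with h' | h'
      · exact .inl ⟨by omega, hG.isAcyclic.parentToward_eq h.symm h'.symm⟩
      · exact .inr ⟨by omega, hG.isAcyclic.parentToward_eq h h'.symm⟩
    · rintro (⟨h, rfl⟩ | ⟨h, rfl⟩)
      · exact (parentToward_spec h).1.symm
      · exact (parentToward_spec h).1

theorem thinness_diameter_bound_general (G : SimpleGraph V) (hT : G.IsTree)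
    (d : ℕ) (hd : IsGreatest {n | ∃ u v : V, G.dist u v = n} d) :
    Thinness G ≤ (d + 4) / 4 := by
  obtain ⟨⟨r, t, hrt⟩, hmax⟩ := hd
  obtain ⟨p, hp⟩ := hT.connected.exists_walk_length_eq_dist r t
  let T := hT.spineRooting p hp
  have hlen : T.len = d := hp.trans hrt
  have hdepth (v : V) : 2 * T.depth v ≤ d :=
    hlen ▸ T.two_mul_depth_le hT.connected (fun x y => hlen ▸ hmax ⟨x, y, rfl⟩) v
  calc Thinness G ≤ d / 2 / 2 + 1 := Nat.sInf_le (T.isKThin fun v => by have := hdepth v; omega)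
    _ = (d + 4) / 4 := by omega

theorem thinness_diameter_bound [Fintype V] (G : SimpleGraph V) (hT : G.IsTree)
    (d : ℕ) (hd : IsGreatest {n | ∃ u v : V, G.dist u v = n} d) :
    Thinness G ≤ (d + 4) / 4 :=
  thinness_diameter_bound_general G hT d hd
end

section
/- A graph G has thinness at least k if and only if for every strict total order ≺ on V(G), the auxiliary graph G_≺ contains a clique of size k. -/
open SimpleGraph

variable {V : Type*}

def AuxAdjHalf (G : SimpleGraph V) (r : V → V → Prop) (v w : V) : Prop :=
  r v w ∧ ∃ z, r w z ∧ G.Adj z v ∧ ¬ G.Adj z w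

def AuxGraph (G : SimpleGraph V) (r : V → V → Prop) : SimpleGraph V where
  Adj v w := v ≠ w ∧ (AuxAdjHalf G r v w ∨ AuxAdjHalf G r w v)
  symm := ⟨fun v w => by intro ⟨h1, h2⟩; exact ⟨h1.symm, h2.symm⟩⟩
  loopless := ⟨fun v => by intro ⟨h1, _⟩; exact h1 rfl⟩

/-!
Fix the order `r` and put `u ⊑ v` when `u = v`, or `r u v` and every neighbour of `u` beyond `v`
is a neighbour of `v`. This is a partial order; a partition is consistent with `r` exactly when its
classes are `⊑`-chains, and `G_≺` is the incomparability graph of `⊑`, so its cliques are the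
`⊑`-antichains. The theorem is therefore Dilworth's theorem for `⊑`.

Dilworth's theorem is proved following Galvin: remove a maximal element `a` and partition the rest
into `w` chains, `w` its width. Every maximum antichain then meets every chain, and in each chain
the greatest element lying in some maximum antichain gives a maximum antichain `T` above all
others. If `T ∪ {a}` is an antichain, `{a}` is a new chain; otherwise `a` lies above some `z ∈ T`,
and removing `a` together with the part of the chain of `z` below `z` lowers the width.
-/

open Finset

section Dilworth

variable {α : Type*} [PartialOrder α] {s t K : Finset α} {f : α → ℕ} {n m : ℕ}

open Classical in
noncomputable def width (s : Finset α) : ℕ :=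
  (s.powerset.filter fun t : Finset α => IsAntichain (· ≤ ·) (t : Set α)).sup card

theorem card_le_width (hts : t ⊆ s) (ht : IsAntichain (· ≤ ·) (t : Set α)) : #t ≤ width s := by
  classical
  exact le_sup (f := card) (mem_filter.2 ⟨mem_powerset.2 hts, ht⟩)

theorem exists_isAntichain_card_eq_width (s : Finset α) :
    ∃ t ⊆ s, IsAntichain (· ≤ ·) (t : Set α) ∧ #t = width s := by
  classical
  obtain ⟨t, ht, htw⟩ :=
    exists_mem_eq_sup (s.powerset.filter fun t : Finset α => IsAntichain (· ≤ ·) (t : Set α))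
      ⟨∅, mem_filter.2 ⟨empty_mem_powerset s, by rw [coe_empty]; exact Set.pairwise_empty _⟩⟩ card
  rw [mem_filter, mem_powerset] at ht
  exact ⟨t, ht.1, ht.2, htw.symm⟩

theorem width_mono (h : s ⊆ t) : width s ≤ width t := by
  obtain ⟨u, hus, hu, huw⟩ := exists_isAntichain_card_eq_width s
  exact huw ▸ card_le_width (hus.trans h) hu

def IsChainPartition (s : Finset α) (n : ℕ) (f : α → ℕ) : Prop :=
  (∀ x ∈ s, f x < n) ∧ ∀ x ∈ s, ∀ y ∈ s, f x = f y → x ≤ y ∨ y ≤ x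

namespace IsChainPartition

theorem injOn (hf : IsChainPartition s n f) (hts : t ⊆ s) (ht : IsAntichain (· ≤ ·) (t : Set α)) :
    Set.InjOn f t := by
  intro x hx y hy hxy
  by_contra hne
  rcases hf.2 x (hts hx) y (hts hy) hxy with h | h
  · exact ht hx hy hne h
  · exact ht hy hx (Ne.symm hne) h

theorem card_le (hf : IsChainPartition s n f) (hts : t ⊆ s)
    (ht : IsAntichain (· ≤ ·) (t : Set α)) : #t ≤ n := by
  simpa using card_le_card_of_injOn f (fun x hx => mem_range.2 (hf.1 x (hts hx))) (hf.injOn hts ht)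

theorem exists_mem_eq (hf : IsChainPartition s n f) (hts : t ⊆ s)
    (ht : IsAntichain (· ≤ ·) (t : Set α)) (hcard : #t = n) {i : ℕ} (hi : i < n) :
    ∃ y ∈ t, f y = i := by
  have himage : t.image f = range n := by
    refine eq_of_subset_of_card_le (fun j hj => ?_) ?_
    · obtain ⟨x, hx, rfl⟩ := mem_image.1 hj
      exact mem_range.2 (hf.1 x (hts hx))
    · rw [card_image_of_injOn (hf.injOn hts ht), hcard, card_range]
  exact mem_image.1 (himage ▸ mem_range.2 hi)

theorem extend [DecidableEq α] [DecidablePred (· ∈ K)] (hf : IsChainPartition (s \ K) n f)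
    (hK : IsChain (· ≤ ·) (K : Set α)) (hnm : n < m) :
    IsChainPartition s m (fun x => if x ∈ K then n else f x) := by
  refine ⟨fun x hx => ?_, fun x hx y hy hxy => ?_⟩
  · dsimp only
    split_ifs with hxK
    · exact hnm
    · exact (hf.1 x (mem_sdiff.2 ⟨hx, hxK⟩)).trans hnm
  by_cases hxK : x ∈ K <;> by_cases hyK : y ∈ K <;> simp only [hxK, hyK, if_true, if_false] at hxy
  · exact hK.total hxK hyK
  · exact absurd hxy (hf.1 y (mem_sdiff.2 ⟨hy, hyK⟩)).ne'
  · exact absurd hxy (hf.1 x (mem_sdiff.2 ⟨hx, hxK⟩)).ne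
  · exact hf.2 x (mem_sdiff.2 ⟨hx, hxK⟩) y (mem_sdiff.2 ⟨hy, hyK⟩) hxy

end IsChainPartition

def IsInMaxAntichain (s : Finset α) (x : α) : Prop :=
  ∃ t ⊆ s, IsAntichain (· ≤ ·) (t : Set α) ∧ #t = width s ∧ x ∈ t

open Classical in
noncomputable def chainTops (s : Finset α) (f : α → ℕ) : Finset α :=
  s.filter fun z => IsInMaxAntichain s z ∧ ∀ y, IsInMaxAntichain s y → f y = f z → y ≤ z

theorem mem_chainTops {z : α} :
    z ∈ chainTops s f ↔
      z ∈ s ∧ IsInMaxAntichain s z ∧ ∀ y, IsInMaxAntichain s y → f y = f z → y ≤ z := by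
  classical
  rw [chainTops, mem_filter]

theorem isAntichain_chainTops (hf : IsChainPartition s (width s) f) :
    IsAntichain (· ≤ ·) (chainTops s f : Set α) := by
  intro z₁ hz₁ z₂ hz₂ hne hle
  obtain ⟨hz₁s, -, htop₁⟩ := mem_chainTops.1 hz₁
  obtain ⟨-, ⟨t, hts, ht, htw, hz₂t⟩, -⟩ := mem_chainTops.1 hz₂
  obtain ⟨y, hyt, hyf⟩ := hf.exists_mem_eq hts ht htw (hf.1 z₁ hz₁s)
  have hyz₁ : y ≤ z₁ := htop₁ y ⟨t, hts, ht, htw, hyt⟩ hyf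
  obtain rfl : y = z₂ := by
    by_contra hyz₂
    exact ht hyt hz₂t hyz₂ (hyz₁.trans hle)
  exact hne (le_antisymm hle hyz₁)

theorem width_le_card_chainTops (hf : IsChainPartition s (width s) f) :
    width s ≤ #(chainTops s f) := by
  classical
  obtain ⟨t, hts, ht, htw⟩ := exists_isAntichain_card_eq_width s
  suffices Set.SurjOn f (chainTops s f) (range (width s)) by
    simpa using card_le_card_of_surjOn f this
  intro i hi
  obtain ⟨y, hyt, rfl⟩ := hf.exists_mem_eq hts ht htw (mem_range.1 hi)
  obtain ⟨z, ⟨hzA, hzmax⟩⟩ := exists_maximal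
    (s := s.filter fun x => IsInMaxAntichain s x ∧ f x = f y)
    ⟨y, mem_filter.2 ⟨hts hyt, ⟨t, hts, ht, htw, hyt⟩, rfl⟩⟩
  obtain ⟨hzs, hzmem, hzf⟩ := mem_filter.1 hzA
  refine ⟨z, mem_chainTops.2 ⟨hzs, hzmem, fun x hx hxf => ?_⟩, hzf⟩
  have hxs : x ∈ s := by
    obtain ⟨u, hus, -, -, hxu⟩ := hx
    exact hus hxu
  have hxA : x ∈ s.filter fun x => IsInMaxAntichain s x ∧ f x = f y :=
    mem_filter.2 ⟨hxs, hx, hxf.trans hzf⟩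
  rcases hf.2 x hxs z hzs hxf with hxz | hzx
  · exact hxz
  · exact hzmax hxA hzx

theorem IsChainPartition.exists_chain_width_sdiff_lt [DecidableEq α] {a : α}
    (hf : IsChainPartition s (width s) f) (ha : ∀ b ∈ s, ¬ a ≤ b)
    (hw : width (insert a s) ≤ width s) :
    ∃ K : Finset α, a ∈ K ∧ IsChain (· ≤ ·) (K : Set α) ∧ width (insert a s \ K) < width s := by
  classical
  obtain ⟨z, hzT, hza⟩ : ∃ z ∈ chainTops s f, z ≤ a := by
    by_contra! h
    have hT : IsAntichain (· ≤ ·) ((insert a (chainTops s f) : Finset α) : Set α) := by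
      rw [coe_insert, isAntichain_insert]
      exact ⟨isAntichain_chainTops hf, fun b hb _ => ⟨ha b (mem_chainTops.1 hb).1, h b hb⟩⟩
    have hTs : insert a (chainTops s f) ⊆ insert a s :=
      insert_subset_insert a fun z hz => (mem_chainTops.1 hz).1
    have haT : a ∉ chainTops s f := fun haT => ha a (mem_chainTops.1 haT).1 le_rfl
    have := card_le_width hTs hT
    rw [card_insert_of_notMem haT] at this
    have := width_le_card_chainTops hf
    omega
  obtain ⟨hzs, -, hztop⟩ := mem_chainTops.1 hzT
  set K : Finset α := insert a (s.filter fun x => f x = f z ∧ x ≤ z)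
  refine ⟨K, mem_insert_self _ _, ?_, ?_⟩
  · rw [coe_insert]
    refine IsChain.insert (fun x hx y hy _ => ?_) (fun x hx _ => Or.inr ?_)
    · obtain ⟨hxs, hxf, -⟩ := mem_filter.1 hx
      obtain ⟨hys, hyf, -⟩ := mem_filter.1 hy
      exact hf.2 x hxs y hys (hxf.trans hyf.symm)
    · exact (mem_filter.1 hx).2.2.trans hza
  by_contra! hle
  obtain ⟨t, hts, ht, htw⟩ := exists_isAntichain_card_eq_width (insert a s \ K)
  have hts' : t ⊆ s := fun x hx => by
    obtain ⟨hxs, hxK⟩ := mem_sdiff.1 (hts hx)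
    exact (mem_insert.1 hxs).resolve_left fun hxa => hxK (mem_insert.2 (Or.inl hxa))
  have htw' : #t = width s := le_antisymm (card_le_width hts' ht) (htw ▸ hle)
  obtain ⟨y, hyt, hyf⟩ := hf.exists_mem_eq hts' ht htw' (hf.1 z hzs)
  have hyz : y ≤ z := hztop y ⟨t, hts', ht, htw', hyt⟩ hyf
  exact (mem_sdiff.1 (hts hyt)).2 (mem_insert_of_mem (mem_filter.2 ⟨hts' hyt, hyf, hyz⟩))

theorem exists_isChainPartition_width (s : Finset α) : ∃ f, IsChainPartition s (width s) f := by
  classical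
  induction s using Finset.strongInduction with
  | H s ih =>
  rcases s.eq_empty_or_nonempty with rfl | hs
  · exact ⟨fun _ => 0, by simp [IsChainPartition]⟩
  obtain ⟨a, has, hamax⟩ := exists_maximal hs
  obtain ⟨f, hf⟩ := ih (s.erase a) (erase_ssubset has)
  have ha : ∀ b ∈ s.erase a, ¬ a ≤ b := fun b hb hab =>
    (mem_erase.1 hb).1 (le_antisymm (hamax (mem_erase.1 hb).2 hab) hab)
  rcases (width_mono (erase_subset a s)).lt_or_eq with hw | hw
  · rw [← sdiff_singleton_eq_erase] at hf hw
    exact ⟨_, hf.extend (Set.Subsingleton.isChain (by simp)) hw⟩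
  · obtain ⟨K, haK, hK, hKw⟩ :=
      hf.exists_chain_width_sdiff_lt ha (by rw [insert_erase has, hw])
    rw [insert_erase has, hw] at hKw
    have hsK : s \ K ⊂ s :=
      (ssubset_iff_of_subset sdiff_subset).2 ⟨a, has, fun h => (mem_sdiff.1 h).2 haK⟩
    obtain ⟨g, hg⟩ := ih (s \ K) hsK
    exact ⟨_, hg.extend hK hKw⟩

end Dilworth

section AuxGraph

def ConsistentLE (G : SimpleGraph V) (r : V → V → Prop) (u v : V) : Prop :=
  u = v ∨ r u v ∧ ∀ z, r v z → G.Adj z u → G.Adj z v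

variable {G : SimpleGraph V} {r : V → V → Prop} [IsStrictTotalOrder V r]

variable (G r) in
abbrev consistentOrder : PartialOrder V where
  le := ConsistentLE G r
  le_refl _ := Or.inl rfl
  le_trans u v w := by
    rintro (rfl | ⟨huv, hu⟩) (rfl | ⟨hvw, hv⟩)
    · exact Or.inl rfl
    · exact Or.inr ⟨hvw, hv⟩
    · exact Or.inr ⟨huv, hu⟩
    · refine Or.inr ⟨_root_.trans huv hvw, fun z hwz hzu => ?_⟩
      exact hv z hwz (hu z (_root_.trans hvw hwz) hzu)
  le_antisymm u v := by
    rintro (rfl | ⟨huv, -⟩) (h | ⟨hvu, -⟩)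
    · rfl
    · rfl
    · exact h.symm
    · exact absurd hvu (asymm huv)

theorem auxGraph_adj_iff {u v : V} :
    (AuxGraph G r).Adj u v ↔ u ≠ v ∧ ¬ ConsistentLE G r u v ∧ ¬ ConsistentLE G r v u := by
  simp only [AuxGraph, AuxAdjHalf, ConsistentLE]
  rcases trichotomous_of r u v with h | rfl | h
  · simp [h, asymm h, ne_of_irrefl h, (ne_of_irrefl h).symm]
  · simp
  · simp [h, asymm h, ne_of_irrefl h, (ne_of_irrefl h).symm]

theorem isClique_auxGraph_iff {s : Set V} :
    (AuxGraph G r).IsClique s ↔ IsAntichain (ConsistentLE G r) s :=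
  ⟨fun h _ hu _ hv huv => (auxGraph_adj_iff.1 (h hu hv huv)).2.1,
    fun h _ hu _ hv huv => auxGraph_adj_iff.2 ⟨huv, h hu hv huv, h hv hu huv.symm⟩⟩

theorem consistent_iff {k : ℕ} {C : V → Fin k} :
    Consistent G r C ↔ ∀ u v, C u = C v → ConsistentLE G r u v ∨ ConsistentLE G r v u := by
  refine ⟨fun hC u v huv => ?_, fun h u v w huv hvw hC hadj => ?_⟩
  · rcases trichotomous_of r u v with h | rfl | h
    · exact Or.inl (Or.inr ⟨h, fun z hvz hzu => (hC u v z h hvz huv hzu.symm).symm⟩)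
    · exact Or.inl (Or.inl rfl)
    · exact Or.inr (Or.inr ⟨h, fun z huz hzv => (hC v u z h huz huv.symm hzv.symm).symm⟩)
  · rcases h u v hC with (rfl | ⟨-, hdom⟩) | (rfl | ⟨hvu, -⟩)
    · exact hadj
    · exact (hdom w hvw hadj.symm).symm
    · exact hadj
    · exact absurd hvu (asymm huv)

theorem exists_consistent_isNClique_auxGraph [Fintype V] :
    ∃ m, (∃ C : V → Fin m, Consistent G r C) ∧ ∃ s, (AuxGraph G r).IsNClique m s := by
  let := consistentOrder G r
  obtain ⟨f, hf⟩ := exists_isChainPartition_width (univ : Finset V)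
  obtain ⟨t, -, ht, htw⟩ := exists_isAntichain_card_eq_width (univ : Finset V)
  refine ⟨width univ, ⟨fun v => ⟨f v, hf.1 v (mem_univ v)⟩, consistent_iff.2 ?_⟩,
    t, isClique_auxGraph_iff.2 ht, htw⟩
  exact fun u v huv => hf.2 u (mem_univ u) v (mem_univ v) (congrArg Fin.val huv)

theorem card_le_of_consistent_of_isClique [Fintype V] {m : ℕ} {C : V → Fin m}
    (hC : Consistent G r C) {s : Finset V} (hs : (AuxGraph G r).IsClique (s : Set V)) :
    #s ≤ m := by
  let := consistentOrder G r
  have hf : IsChainPartition univ m fun v => C v :=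
    ⟨fun v _ => (C v).isLt, fun u _ v _ huv => consistent_iff.1 hC u v (Fin.ext huv)⟩
  exact hf.card_le (subset_univ s) (isClique_auxGraph_iff.1 hs)

end AuxGraph

theorem thinness_iff_clique [Fintype V] (G : SimpleGraph V) (k : ℕ) :
    k ≤ Thinness G ↔
      ∀ r : V → V → Prop, IsStrictTotalOrder V r →
        ∃ s : Finset V, (AuxGraph G r).IsNClique k s := by
  constructor
  · intro hk r hr
    obtain ⟨m, ⟨C, hC⟩, s, hs⟩ := exists_consistent_isNClique_auxGraph (G := G) (r := r)
    obtain ⟨s', hs's, hs'k⟩ :=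
      exists_subset_card_eq (hs.card_eq ▸ hk.trans (Nat.sInf_le ⟨r, hr, C, hC⟩))
    exact ⟨s', hs.isClique.subset hs's, hs'k⟩
  · intro h
    obtain ⟨m, ⟨C, hC⟩, -⟩ :=
      exists_consistent_isNClique_auxGraph (G := G) (r := WellOrderingRel)
    refine le_csInf ⟨m, WellOrderingRel, inferInstance, C, hC⟩ ?_
    rintro m ⟨r, hr, C, hC⟩
    obtain ⟨s, hs⟩ := h r hr
    exact hs.card_eq ▸ card_le_of_consistent_of_isClique hC hs.isClique
end
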